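/- arXiv:0708.4366 — 4 statements merged into one kernel-verified Lean document; each statement's English description precedes it below -/
import Mathlib

section
/- For every sequence (J_n, w_n)_{n ≥ 0} in T(J, δ), there exists N ≥ 0 such that J_n = J_N and w_n = w_N for all n ≥ N; that is, the subsets J_n and the elements w_n eventually stabilize. -/
namespace HePaper

variable {I : Type*} {M : CoxeterMatrix I} {W : Type*} [Group W]

/-- The standard parabolic subgroup `W_J` generated by the simple reflections `s_j`, `j ∈ J`. -/
def parabolic (cs : CoxeterSystem M W) (J : Set I) : Subgroup W :=
  Subgroup.closure (cs.simple '' J)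

/-- `W^J`, the set of minimal length coset representatives for `W/W_J`. -/
def minRight (cs : CoxeterSystem M W) (J : Set I) : Set W :=
  {w : W | ∀ j ∈ J, cs.length w < cs.length (w * cs.simple j)}

/-- `^J W`, the set of minimal length coset representatives for `W_J\W`. -/
def minLeft (cs : CoxeterSystem M W) (J : Set I) : Set W :=
  {w : W | ∀ j ∈ J, cs.length w < cs.length (cs.simple j * w)}

/-- `Ad(u)(K) = {k ∈ I : s_k = u s_j u⁻¹ for some j ∈ K}`. -/
def AdSet (cs : CoxeterSystem M W) (u : W) (K : Set I) : Set I :=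
  {k : I | ∃ j ∈ K, cs.simple k = u * cs.simple j * u⁻¹}

/-- Membership in the set `T(J, δ)` of sequences `(J_n, w_n)_{n ≥ 0}`. -/
def InT (cs : CoxeterSystem M W) (J : Set I) (δ : I ≃ I)
    (Jseq : ℕ → Set I) (wseq : ℕ → W) : Prop :=
  Jseq 0 = J ∧
  (∀ n : ℕ, Jseq (n + 1) = Jseq n ∩ AdSet cs (wseq n) (δ '' Jseq n)) ∧
  (∀ n : ℕ, wseq n ∈ minLeft cs (Jseq n) ∩ minRight cs (δ '' Jseq n)) ∧
  (∀ n : ℕ, ∃ x ∈ parabolic cs (Jseq (n + 1)), ∃ y ∈ parabolic cs (δ '' Jseq n),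
      wseq (n + 1) = x * wseq n * y)

/-- `I(J, δ; w)`: the largest subset `K ⊆ J` with `Ad(w)(K) = δ(K)`. -/
def IJdw (cs : CoxeterSystem M W) (J : Set I) (δ : I ≃ I) (w : W) : Set I :=
  ⋃₀ {K : Set I | K ⊆ J ∧ AdSet cs w K = δ '' K}

/-- The orbit of `w` under the `W_J`-action `x · y = δ(x) y x⁻¹`. -/
def orbit (cs : CoxeterSystem M W) (J : Set I) (δW : W ≃* W) (w : W) : Set W :=
  {y : W | ∃ x ∈ parabolic cs J, y = δW x * w * x⁻¹}

/-- The set of elements of minimal length in the orbit of `w`. -/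
def orbitMin (cs : CoxeterSystem M W) (J : Set I) (δW : W ≃* W) (w : W) : Set W :=
  {v ∈ orbit cs J δW w | ∀ u ∈ orbit cs J δW w, cs.length v ≤ cs.length u}

/-- `w →_{s_j} w'` for some `j ∈ J`: `w' = s_{δ(j)} w s_j` and `ℓ(w') ≤ ℓ(w)`. -/
def stepTo (cs : CoxeterSystem M W) (J : Set I) (δ : I ≃ I) (w w' : W) : Prop :=
  ∃ j ∈ J, w' = cs.simple (δ j) * w * cs.simple j ∧ cs.length w' ≤ cs.length w

/-- `w →_{J,δ} w'`. -/
def toRel (cs : CoxeterSystem M W) (J : Set I) (δ : I ≃ I) : W → W → Prop :=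
  Relation.ReflTransGen (stepTo cs J δ)

/-- `w` and `w'` are elementarily strongly `(J, δ)`-conjugate. -/
def ElemStrong (cs : CoxeterSystem M W) (J : Set I) (δW : W ≃* W) (w w' : W) : Prop :=
  cs.length w = cs.length w' ∧
  ∃ x ∈ parabolic cs J, w' = δW x * w * x⁻¹ ∧
    (cs.length (δW x * w) = cs.length x + cs.length w ∨
     cs.length (w * x⁻¹) = cs.length x + cs.length w)

/-- `w ∼_{J,δ} w'`: strongly `(J, δ)`-conjugate. -/
def simRel (cs : CoxeterSystem M W) (J : Set I) (δW : W ≃* W) : W → W → Prop :=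
  Relation.ReflTransGen (ElemStrong cs J δW)

/-- The Bruhat order on `W`: some reduced word for `w` contains a subword that is a
reduced word for `u`. -/
def bruhatLE (cs : CoxeterSystem M W) (u w : W) : Prop :=
  ∃ ω : List I, cs.wordProd ω = w ∧ cs.IsReduced ω ∧
    ∃ ω' : List I, ω'.Sublist ω ∧ cs.wordProd ω' = u ∧ cs.IsReduced ω'

/-- `supp(w)`: the smallest subset `K ⊆ I` with `w ∈ W_K`. -/
def supp (cs : CoxeterSystem M W) (w : W) : Set I :=
  ⋂₀ {K : Set I | w ∈ parabolic cs K}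

/-- `supp_δ(w)`: the smallest `δ`-stable subset of `I` containing `supp(w)`. -/
def suppDelta (cs : CoxeterSystem M W) (δ : I ≃ I) (w : W) : Set I :=
  ⋃ n : ℕ, (⇑δ)^[n] '' supp cs w

/-- `w ≤_{J,δ} w'` for `w, w' ∈ W^J`. -/
def leJd (cs : CoxeterSystem M W) (J : Set I) (δW : W ≃* W) (w w' : W) : Prop :=
  ∀ v' ∈ orbitMin cs J δW w', ∃ v ∈ orbitMin cs J δW w, bruhatLE cs v v'



/-! ### Auxiliary machinery: parity of reflection occurrences in inversion sequences -/

section Aux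

open Classical in
/-- indicator with values in `ZMod 2` -/
noncomputable def ind (p : Prop) : ZMod 2 := if p then 1 else 0

theorem ind_congr {p q : Prop} (h : p ↔ q) : ind p = ind q := by
  have hpq : p = q := propext h
  subst hpq; rfl

theorem ind_of_false {p : Prop} (h : ¬ p) : ind p = 0 := by simp [ind, h]

theorem ind_of_true {p : Prop} (h : p) : ind p = 1 := by simp [ind, h]

theorem zmod2_cases (x : ZMod 2) : x = 0 ∨ x = 1 := by revert x; decide

/-- The group `(W → ZMod 2) ⋊ W` used to track parities of reflection multiplicities. -/
def NuG (W : Type*) [Group W] : Type _ := W × (W → ZMod 2)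

variable {W : Type*} [Group W]

instance : Group (NuG W) where
  mul a b := (a.1 * b.1, fun t => a.2 (b.1 * t * b.1⁻¹) + b.2 t)
  one := (1, 0)
  inv a := (a.1⁻¹, fun t => a.2 (a.1⁻¹ * t * a.1))
  mul_assoc a b c := by
    refine Prod.ext (mul_assoc _ _ _) (funext fun t => ?_)
    show a.2 (b.1 * (c.1 * t * c.1⁻¹) * b.1⁻¹) + b.2 (c.1 * t * c.1⁻¹) + c.2 t
      = a.2 (b.1 * c.1 * t * (b.1 * c.1)⁻¹) + (b.2 (c.1 * t * c.1⁻¹) + c.2 t)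
    have harg : b.1 * (c.1 * t * c.1⁻¹) * b.1⁻¹ = b.1 * c.1 * t * (b.1 * c.1)⁻¹ := by group
    rw [harg, add_assoc]
  one_mul a := by
    refine Prod.ext (one_mul _) (funext fun t => ?_)
    show (0 : W → ZMod 2) _ + a.2 t = a.2 t
    simp
  mul_one a := by
    refine Prod.ext (mul_one _) (funext fun t => ?_)
    show a.2 (1 * t * 1⁻¹) + (0 : W → ZMod 2) t = a.2 t
    simp
  inv_mul_cancel a := by
    refine Prod.ext (inv_mul_cancel _) (funext fun t => ?_)
    show a.2 (a.1⁻¹ * (a.1 * t * a.1⁻¹) * a.1) + a.2 t = (0 : W → ZMod 2) t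
    have : a.1⁻¹ * (a.1 * t * a.1⁻¹) * a.1 = t := by group
    rw [this]
    show a.2 t + a.2 t = 0
    exact CharTwo.add_self_eq_zero _

theorem NuG.mul_def (a b : NuG W) :
    a * b = (a.1 * b.1, fun t => a.2 (b.1 * t * b.1⁻¹) + b.2 t) := rfl

theorem NuG.one_def : (1 : NuG W) = ((1 : W), (0 : W → ZMod 2)) := rfl



variable (cs : CoxeterSystem M W)

local prefix:100 "s" => cs.simple
local prefix:100 "π" => cs.wordProd
local prefix:100 "ℓ" => cs.length
local prefix:100 "ris" => cs.rightInvSeq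

/-- generator images in `NuG W` -/
noncomputable def xg (i : I) : NuG W := (cs.simple i, fun t => ind (t = cs.simple i))

theorem cks (i j : I) (k : ℕ) :
    (s i * s j) ^ k * s j * (s i * s j) ^ k = s j := by
  induction k with
  | zero => simp
  | succ k ih =>
    calc (s i * s j) ^ (k+1) * s j * (s i * s j) ^ (k+1)
        = (s i * s j) * ((s i * s j) ^ k * s j * (s i * s j) ^ k) * (s i * s j) := by
          nth_rewrite 1 [pow_succ']
          nth_rewrite 1 [pow_succ]
          simp only [mul_assoc]
      _ = (s i * s j) * s j * (s i * s j) := by rw [ih]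
      _ = s j := by simp [mul_assoc, cs.simple_mul_simple_cancel_left]

theorem conj_eq_iff {G : Type*} [Group G] (a b z t : G) :
    a * t * b = z ↔ t = a⁻¹ * z * b⁻¹ := by
  constructor
  · intro h; rw [← h]; group
  · intro h; rw [h]; group

theorem inv_pow_simple_mul (i j : I) (k : ℕ) :
    ((s i * s j) ^ k)⁻¹ * s j = s j * (s i * s j) ^ k := by
  have h := cks cs i j k
  calc ((s i * s j) ^ k)⁻¹ * s j
      = ((s i * s j) ^ k)⁻¹ * ((s i * s j) ^ k * s j * (s i * s j) ^ k) := by rw [h]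
    _ = s j * (s i * s j) ^ k := by group

theorem xg_pow (i j : I) (k : ℕ) :
    (xg cs i * xg cs j) ^ k
      = ((s i * s j) ^ k,
          fun t => ∑ e ∈ Finset.range (2 * k), ind (t = s j * (s i * s j) ^ e)) := by
  induction k with
  | zero =>
    rw [pow_zero, pow_zero]
    exact Prod.ext rfl (funext fun t => by simp [NuG.one_def])
  | succ k ih =>
    rw [pow_succ', ih]
    refine Prod.ext ?_ (funext fun t => ?_)
    · show (s i) * (s j) * (s i * s j) ^ k = (s i * s j) ^ (k + 1)
      rw [pow_succ', mul_assoc]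
    · show ind ((s j) * ((s i * s j) ^ k * t * ((s i * s j) ^ k)⁻¹) * (s j)⁻¹ = s i)
          + ind ((s i * s j) ^ k * t * ((s i * s j) ^ k)⁻¹ = s j)
          + ∑ e ∈ Finset.range (2 * k), ind (t = s j * (s i * s j) ^ e)
        = ∑ e ∈ Finset.range (2 * (k + 1)), ind (t = s j * (s i * s j) ^ e)
      have h2k : 2 * (k + 1) = (2 * k + 1) + 1 := by ring
      rw [h2k, Finset.sum_range_succ, Finset.sum_range_succ]
      have e1 : ind ((s j) * ((s i * s j) ^ k * t * ((s i * s j) ^ k)⁻¹) * (s j)⁻¹ = s i)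
          = ind (t = s j * (s i * s j) ^ (2 * k + 1)) := by
        refine ind_congr ?_
        rw [conj_eq_iff, conj_eq_iff, inv_inv, cs.inv_simple]
        have v1 : ((s i * s j) ^ k)⁻¹ * (s j * s i * s j) * (s i * s j) ^ k
            = s j * (s i * s j) ^ (2 * k + 1) := by
          calc ((s i * s j) ^ k)⁻¹ * (s j * s i * s j) * (s i * s j) ^ k
              = (((s i * s j) ^ k)⁻¹ * s j) * ((s i * s j) * (s i * s j) ^ k) := by
                simp only [mul_assoc]
            _ = (s j * (s i * s j) ^ k) * ((s i * s j) * (s i * s j) ^ k) := by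
                rw [inv_pow_simple_mul]
            _ = s j * ((s i * s j) ^ k * (s i * s j) ^ (k + 1)) := by
                rw [← pow_succ']; simp only [mul_assoc]
            _ = s j * (s i * s j) ^ (2 * k + 1) := by rw [← pow_add]; congr 1; ring
        rw [← v1]
        constructor
        · intro h; rw [h]; group
        · intro h; rw [h]; group
      have e2 : ind ((s i * s j) ^ k * t * ((s i * s j) ^ k)⁻¹ = s j)
          = ind (t = s j * (s i * s j) ^ (2 * k)) := by
        refine ind_congr ?_
        rw [conj_eq_iff, inv_inv]
        have v2 : ((s i * s j) ^ k)⁻¹ * s j * (s i * s j) ^ k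
            = s j * (s i * s j) ^ (2 * k) := by
          rw [inv_pow_simple_mul, mul_assoc, ← pow_add]
          congr 2
          ring
        rw [v2]
      rw [e1, e2]
      ring

theorem xg_liftable : M.IsLiftable (xg cs) := by
  intro i j
  rw [xg_pow]
  refine Prod.ext ?_ (funext fun t => ?_)
  · exact cs.simple_mul_simple_pow i j
  · show ∑ e ∈ Finset.range (2 * M i j), ind (t = s j * (s i * s j) ^ e) = 0
    rw [two_mul, Finset.sum_range_add]
    have : ∀ e, ind (t = s j * (s i * s j) ^ (M i j + e))
        = ind (t = s j * (s i * s j) ^ e) := by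
      intro e
      exact ind_congr (by rw [pow_add, cs.simple_mul_simple_pow, one_mul])
    rw [Finset.sum_congr rfl (fun e _ => this e)]
    exact CharTwo.add_self_eq_zero _



theorem xg_defn (i : I) : xg cs i = (cs.simple i, fun t => ind (t = cs.simple i)) := rfl

/-- The parity homomorphism `W →* NuG W`. -/
noncomputable def phi : W →* NuG W := cs.lift ⟨xg cs, xg_liftable cs⟩

theorem phi_simple (i : I) : phi cs (s i) = xg cs i := by
  unfold phi
  exact cs.lift_apply_simple (xg_liftable cs) i

/-- sum of indicators of entries of the right inversion sequence -/
noncomputable def Ffun (ω : List I) (t : W) : ZMod 2 :=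
  ((cs.rightInvSeq ω).map (fun r => ind (t = r))).sum

theorem Ffun_nil (t : W) : Ffun cs [] t = 0 := by simp [Ffun]

theorem Ffun_eq_zero_of_not_mem {ω : List I} {t : W} (h : t ∉ ris ω) :
    Ffun cs ω t = 0 := by
  unfold Ffun
  rw [List.sum_eq_zero]
  intro x hx
  rw [List.mem_map] at hx
  obtain ⟨r, hr, rfl⟩ := hx
  exact ind_of_false (fun hh => h (hh ▸ hr))

theorem phi_wordProd (ω : List I) : phi cs (π ω) = (π ω, Ffun cs ω) := by
  induction ω with
  | nil =>
    rw [cs.wordProd_nil, map_one, NuG.one_def]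
    exact Prod.ext rfl (funext fun t => (Ffun_nil cs t).symm)
  | cons i ω ih =>
    rw [cs.wordProd_cons, map_mul, phi_simple, ih, xg_defn cs]
    refine Prod.ext rfl (funext fun t => ?_)
    show ind ((π ω) * t * (π ω)⁻¹ = s i) + Ffun cs ω t = Ffun cs (i :: ω) t
    have hris : ris (i :: ω) = (π ω)⁻¹ * s i * (π ω) :: ris ω := rfl
    have h2 : Ffun cs (i :: ω) t = ind (t = (π ω)⁻¹ * s i * (π ω)) + Ffun cs ω t := by
      unfold Ffun
      rw [hris, List.map_cons, List.sum_cons]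
    rw [h2]
    congr 1
    refine ind_congr ?_
    constructor
    · intro h; rw [← h]; group
    · intro h; rw [h]; group

/-- `nu w t`: the parity of the number of times the reflection `t` occurs in the
right inversion sequence of any word for `w`. -/
noncomputable def nu (w t : W) : ZMod 2 := (phi cs w).2 t

theorem phi_fst (w : W) : (phi cs w).1 = w := by
  obtain ⟨ω, rfl⟩ := cs.wordProd_surjective w
  rw [phi_wordProd]

theorem phi_eq (w : W) : phi cs w = (w, nu cs w) := by
  refine Prod.ext (phi_fst cs w) rfl

theorem nu_wordProd (ω : List I) (t : W) : nu cs (π ω) t = Ffun cs ω t := by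
  unfold nu
  rw [phi_wordProd]

theorem nu_mul (a b t : W) : nu cs (a * b) t = nu cs a (b * t * b⁻¹) + nu cs b t := by
  unfold nu
  rw [map_mul, NuG.mul_def]
  show (phi cs a).2 ((phi cs b).1 * t * ((phi cs b).1)⁻¹) + (phi cs b).2 t = _
  rw [phi_fst]

theorem nu_one (t : W) : nu cs 1 t = 0 := by
  unfold nu
  rw [map_one, NuG.one_def]
  rfl

theorem nu_simple (i : I) (t : W) : nu cs (s i) t = ind (t = s i) := by
  unfold nu
  rw [phi_simple, xg_defn cs]

theorem nu_inv (w t : W) : nu cs w⁻¹ (w * t * w⁻¹) = nu cs w t := by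
  have h := nu_mul cs w⁻¹ w t
  rw [inv_mul_cancel, nu_one] at h
  have h2 : w * t * w⁻¹ = w * t * w⁻¹ := rfl
  rcases zmod2_cases (nu cs w⁻¹ (w * t * w⁻¹)) with h1 | h1 <;>
    rcases zmod2_cases (nu cs w t) with h3 | h3 <;>
    rw [h1, h3] at h ⊢ <;> first | rfl | simp at h

theorem nu_refl_self {t : W} (ht : cs.IsReflection t) : nu cs t t = 1 := by
  obtain ⟨w, i, rfl⟩ := ht
  have e1 : w * s i * w⁻¹ = w * (s i * w⁻¹) := by group
  rw [e1, nu_mul]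
  have e2 : s i * w⁻¹ * (w * (s i * w⁻¹)) * (s i * w⁻¹)⁻¹ = s i := by group
  rw [e2, nu_mul]
  have e3 : w⁻¹ * (w * (s i * w⁻¹)) * w⁻¹⁻¹ = s i := by group
  rw [e3, nu_simple, ind_of_true rfl, ← e1, nu_inv]
  have : ∀ a : ZMod 2, a + (1 + a) = 1 := by decide
  exact this _


theorem nu_mem_ris {ω : List I} {t : W} (h : nu cs (π ω) t = 1) : t ∈ ris ω := by
  by_contra hmem
  rw [nu_wordProd, Ffun_eq_zero_of_not_mem cs hmem] at h
  exact zero_ne_one h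

theorem nu_eq_one_iff {w t : W} (ht : cs.IsReflection t) :
    nu cs w t = 1 ↔ ℓ (w * t) < ℓ w := by
  constructor
  · intro h
    obtain ⟨ω, hred, rfl⟩ := cs.exists_reduced_word' w
    exact (cs.isRightInversion_of_mem_rightInvSeq hred (nu_mem_ris cs h)).2
  · intro hlt
    rcases zmod2_cases (nu cs w t) with h0 | h1
    · exfalso
      have harg : t * t * t⁻¹ = t := by rw [ht.mul_self, one_mul, ht.inv]
      have h2 : nu cs (w * t) t = 1 := by
        rw [nu_mul, harg, h0, nu_refl_self cs ht, zero_add]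
      obtain ⟨ω, hred, hw⟩ := cs.exists_reduced_word' (w * t)
      rw [hw] at h2
      have h3 := (cs.isRightInversion_of_mem_rightInvSeq hred (nu_mem_ris cs h2)).2
      rw [← hw, mul_assoc, ht.mul_self, mul_one] at h3
      exact lt_asymm hlt h3
    · exact h1

theorem word_mem_parabolic {L : Set I} {ω : List I} (hω : ∀ j ∈ ω, j ∈ L) :
    π ω ∈ parabolic cs L := by
  induction ω with
  | nil => rw [cs.wordProd_nil]; exact one_mem _
  | cons i ω ih =>
    rw [cs.wordProd_cons]
    exact mul_mem (Subgroup.subset_closure ⟨i, hω i (by simp), rfl⟩)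
      (ih (fun j hj => hω j (by simp [hj])))

theorem parabolic_exists_word {L : Set I} {p : W} (hp : p ∈ parabolic cs L) :
    ∃ ω : List I, (∀ j ∈ ω, j ∈ L) ∧ π ω = p := by
  induction hp using Subgroup.closure_induction with
  | mem x hx =>
    obtain ⟨i, hi, rfl⟩ := hx
    exact ⟨[i], by simpa using hi, cs.wordProd_singleton i⟩
  | one => exact ⟨[], by simp, cs.wordProd_nil⟩
  | mul a b ha hb iha ihb =>
    obtain ⟨ω₁, h₁, rfl⟩ := iha
    obtain ⟨ω₂, h₂, rfl⟩ := ihb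
    refine ⟨ω₁ ++ ω₂, ?_, cs.wordProd_append ω₁ ω₂⟩
    intro j hj
    rcases List.mem_append.mp hj with h | h
    exacts [h₁ j h, h₂ j h]
  | inv a ha iha =>
    obtain ⟨ω, h₁, rfl⟩ := iha
    exact ⟨ω.reverse, fun j hj => h₁ j (List.mem_reverse.mp hj), cs.wordProd_reverse ω⟩

theorem ris_mem_parabolic {L : Set I} {ω : List I} (hω : ∀ j ∈ ω, j ∈ L) :
    ∀ r ∈ ris ω, r ∈ parabolic cs L := by
  induction ω with
  | nil => simp
  | cons i ω ih =>
    intro r hr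
    have : cs.rightInvSeq (i :: ω) = (π ω)⁻¹ * s i * (π ω) :: cs.rightInvSeq ω := rfl
    rw [this, List.mem_cons] at hr
    rcases hr with rfl | hr
    · have hπ : π ω ∈ parabolic cs L := word_mem_parabolic cs (fun j hj => hω j (by simp [hj]))
      exact mul_mem (mul_mem (inv_mem hπ)
        (Subgroup.subset_closure ⟨i, hω i (by simp), rfl⟩)) hπ
    · exact ih (fun j hj => hω j (by simp [hj])) r hr

open Classical in
theorem word_reduce (L : Set I) : ∀ (n : ℕ) (ω : List I), ω.length = n → (∀ j ∈ ω, j ∈ L) →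
    ∃ τ : List I, (∀ j ∈ τ, j ∈ L) ∧ cs.IsReduced τ ∧ π τ = π ω := by
  intro n
  induction n using Nat.strong_induction_on with
  | _ n IH =>
  intro ω hn hω
  subst hn
  by_cases hred : cs.IsReduced ω
  · exact ⟨ω, hω, hred, rfl⟩
  · have hex : ∃ m, ¬ cs.IsReduced (ω.take m) := ⟨ω.length, by rwa [List.take_length]⟩
    obtain ⟨k₀, hk₀, hmin, hk₀le⟩ : ∃ k₀, ¬ cs.IsReduced (ω.take k₀)
        ∧ (∀ m, m < k₀ → cs.IsReduced (ω.take m)) ∧ k₀ ≤ ω.length := by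
      refine ⟨Nat.find hex, Nat.find_spec hex, ?_, Nat.find_le (by rwa [List.take_length])⟩
      intro m hm
      by_contra hc
      exact absurd hm (not_lt.mpr (Nat.find_le hc))
    have hk₀pos : k₀ ≠ 0 := by
      intro h0
      rw [h0] at hk₀
      exact hk₀ (by simp [CoxeterSystem.IsReduced])
    obtain ⟨k, rfl⟩ : ∃ k, k₀ = k + 1 := ⟨k₀ - 1, by omega⟩
    have hkle : k + 1 ≤ ω.length := hk₀le
    have hklt : k < ω.length := by omega
    have hredk : cs.IsReduced (ω.take k) := hmin k (by omega)
    have hlenk : (ω.take k).length = k := by rw [List.length_take]; omega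
    have htake : ω.take (k + 1) = ω.take k ++ [ω[k]] := by
      rw [List.take_succ, List.getElem?_eq_getElem hklt]
      rfl
    have hlen1 : ℓ (π (ω.take k) * s (ω[k])) ≠ k + 1 := by
      intro hc
      apply hk₀
      unfold CoxeterSystem.IsReduced
      rw [htake, cs.wordProd_append, cs.wordProd_singleton, List.length_append,
        hlenk, List.length_singleton, hc]
    have hsmul := cs.length_mul_simple (π (ω.take k)) (ω[k])
    have hπk : ℓ (π (ω.take k)) = k := by rw [hredk, hlenk]
    have hlt2 : ℓ (π (ω.take k) * s (ω[k])) < ℓ (π (ω.take k)) := by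
      rcases hsmul with h | h
      · exact absurd (by rw [h, hπk]) hlen1
      · omega
    have hnu : nu cs (π (ω.take k)) (s (ω[k])) = 1 :=
      (nu_eq_one_iff cs (cs.isReflection_simple (ω[k]))).mpr hlt2
    have hmem : s (ω[k]) ∈ ris (ω.take k) := nu_mem_ris cs hnu
    obtain ⟨l, hl, hget⟩ := List.mem_iff_getElem.mp hmem
    have hgetD : (cs.rightInvSeq (ω.take k)).getD l 1 = s (ω[k]) := by
      rw [List.getD_eq_getElem _ _ hl, hget]
    have herase : π (ω.take k) * s (ω[k]) = π ((ω.take k).eraseIdx l) := by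
      rw [← hgetD]
      exact cs.wordProd_mul_getD_rightInvSeq _ _
    have hllt : l < k := by
      have := cs.length_rightInvSeq (ω.take k)
      rw [this, hlenk] at hl
      exact hl
    set ω' := (ω.take k).eraseIdx l ++ ω.drop (k + 1) with hω'def
    have hπω' : π ω' = π ω := by
      conv_rhs => rw [← List.take_append_drop (k + 1) ω]
      rw [hω'def, cs.wordProd_append, cs.wordProd_append, ← herase, htake,
        cs.wordProd_append, cs.wordProd_singleton]
    have hω'L : ∀ j ∈ ω', j ∈ L := by
      intro j hj
      rcases List.mem_append.mp hj with h | h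
      · exact hω j ((ω.take_sublist k).subset
          (((ω.take k).eraseIdx_sublist l).subset h))
      · exact hω j ((ω.drop_sublist (k + 1)).subset h)
    have hω'len : ω'.length < ω.length := by
      rw [hω'def, List.length_append, List.length_eraseIdx, hlenk, List.length_drop]
      simp only [hllt, if_pos]
      omega
    obtain ⟨τ, hτL, hτred, hτπ⟩ := IH ω'.length hω'len ω' rfl hω'L
    exact ⟨τ, hτL, hτred, by rw [hτπ, hπω']⟩

theorem parabolic_exists_reduced_word {L : Set I} {p : W} (hp : p ∈ parabolic cs L) :
    ∃ τ : List I, (∀ j ∈ τ, j ∈ L) ∧ cs.IsReduced τ ∧ π τ = p := by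
  obtain ⟨ω, hω, rfl⟩ := parabolic_exists_word cs hp
  exact word_reduce cs L ω.length ω rfl hω


theorem minRight_mul_parabolic_length {L : Set I} :
    ∀ (n : ℕ) (u : W), ℓ u = n → u ∈ minRight cs L → ∀ p ∈ parabolic cs L,
      ℓ (u * p) = ℓ u + ℓ p := by
  intro n
  induction n using Nat.strong_induction_on with
  | _ n IH =>
  intro u hn hu p hp
  by_cases hu1 : u = 1
  · subst hu1; simp
  · obtain ⟨k, hk⟩ := cs.exists_leftDescent_of_ne_one hu1
    set u₁ := s k * u with hu₁def
    have hcancel : s k * u₁ = u := cs.simple_mul_simple_cancel_left k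
    have hlen1 : ℓ u₁ + 1 = ℓ u := by
      rcases cs.length_simple_mul u k with h | h
      · exact absurd h (by unfold CoxeterSystem.IsLeftDescent at hk; omega)
      · exact h
    have hu₁min : u₁ ∈ minRight cs L := by
      intro j hj
      have h1 := hu j hj
      have h2 : ℓ (u * s j) ≤ ℓ (u₁ * s j) + 1 := by
        have e : u * s j = s k * (u₁ * s j) := by rw [← hcancel]; group
        rw [e]
        calc ℓ (s k * (u₁ * s j)) ≤ ℓ (s k) + ℓ (u₁ * s j) := cs.length_mul_le _ _
          _ = ℓ (u₁ * s j) + 1 := by rw [cs.length_simple]; omega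
      omega
    rcases cs.length_simple_mul (u₁ * p) k with hcase | hcase
    · have hup : u * p = s k * (u₁ * p) := by rw [← hcancel]; group
      rw [hup, hcase, IH (ℓ u₁) (by omega) u₁ rfl hu₁min p hp]
      omega
    · exfalso
      -- hcase : ℓ (s k * (u₁ * p)) + 1 = ℓ (u₁ * p)
      have einv : ((u₁ * p)⁻¹ * s k)⁻¹ = (s k)⁻¹ * (u₁ * p) := by group
      rw [cs.inv_simple] at einv
      have hvlt : ℓ ((u₁ * p)⁻¹ * s k) < ℓ ((u₁ * p)⁻¹) := by
        calc ℓ ((u₁ * p)⁻¹ * s k) = ℓ (((u₁ * p)⁻¹ * s k)⁻¹) := (cs.length_inv _).symm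
          _ = ℓ (s k * (u₁ * p)) := by rw [einv]
          _ < ℓ ((u₁ * p)⁻¹) := by rw [cs.length_inv]; omega
      have hnu1 : nu cs ((u₁ * p)⁻¹) (s k) = 1 :=
        (nu_eq_one_iff cs (cs.isReflection_simple k)).mpr hvlt
      rw [mul_inv_rev, nu_mul, inv_inv] at hnu1
      have hnu2 : nu cs u₁⁻¹ (s k) = 0 := by
        rcases zmod2_cases (nu cs u₁⁻¹ (s k)) with h0 | h1
        · exact h0
        · exfalso
          have hlt := (nu_eq_one_iff cs (cs.isReflection_simple k)).mp h1
          have e2 : (u₁⁻¹ * s k)⁻¹ = (s k)⁻¹ * u₁ := by group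
          rw [cs.inv_simple] at e2
          have e3 : ℓ (u₁⁻¹ * s k) = ℓ (s k * u₁) := by
            rw [← cs.length_inv (u₁⁻¹ * s k), e2]
          rw [e3, hcancel, cs.length_inv] at hlt
          omega
      rw [hnu2, add_zero] at hnu1
      set r := u₁⁻¹ * s k * u₁ with hrdef
      obtain ⟨τ, hτL, hτred, hτπ⟩ := parabolic_exists_reduced_word cs (inv_mem hp)
      have hmem : r ∈ cs.rightInvSeq τ := nu_mem_ris cs (by rw [hτπ]; exact hnu1)
      have hrpar : r ∈ parabolic cs L := ris_mem_parabolic cs hτL r hmem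
      have hrrefl : cs.IsReflection r := ⟨u₁⁻¹, k, by rw [hrdef, inv_inv]⟩
      have hu₁r : u₁ * r = u := by rw [hrdef, ← hcancel]; group
      have hlr : ℓ (u₁ * r) = ℓ u₁ + ℓ r := IH (ℓ u₁) (by omega) u₁ rfl hu₁min r hrpar
      have hr1 : ℓ r = 1 := by rw [hu₁r] at hlr; omega
      obtain ⟨τ₀, hτ₀L, hτ₀red, hτ₀π⟩ := parabolic_exists_reduced_word cs hrpar
      have hτ₀len : τ₀.length = 1 := by
        unfold CoxeterSystem.IsReduced at hτ₀red
        rw [← hτ₀red, hτ₀π, hr1]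
      obtain ⟨j, rfl⟩ := List.length_eq_one_iff.mp hτ₀len
      have hjL : j ∈ L := hτ₀L j (by simp)
      have hrs : r = s j := by rw [← hτ₀π, cs.wordProd_singleton]
      have husj : u * s j = u₁ := by
        rw [← hrs, ← hu₁r, mul_assoc, hrrefl.mul_self, mul_one]
      have hfin := hu j hjL
      rw [husj] at hfin
      omega

theorem minRight_unique {L : Set I} {u v : W} (hu : u ∈ minRight cs L)
    (hv : v ∈ minRight cs L) {p : W} (hp : p ∈ parabolic cs L) (hvu : v = u * p) :
    v = u := by
  have h1 : ℓ v = ℓ u + ℓ p := by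
    rw [hvu]; exact minRight_mul_parabolic_length cs (ℓ u) u rfl hu p hp
  have h2 : ℓ u = ℓ v + ℓ p⁻¹ := by
    have : u = v * p⁻¹ := by rw [hvu]; group
    rw [this]
    exact minRight_mul_parabolic_length cs (ℓ v) v rfl hv p⁻¹ (inv_mem hp)
  rw [cs.length_inv] at h2
  have hp0 : ℓ p = 0 := by omega
  have : p = 1 := cs.length_eq_zero_iff.mp hp0
  rw [hvu, this, mul_one]

theorem conj_parabolic_mem (cs : CoxeterSystem M W) {K L : Set I} {w : W}
    (h : ∀ k ∈ K, w⁻¹ * cs.simple k * w ∈ parabolic cs L) {x : W}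
    (hx : x ∈ parabolic cs K) : w⁻¹ * x * w ∈ parabolic cs L := by
  unfold parabolic at hx
  induction hx using Subgroup.closure_induction with
  | mem z hz =>
    obtain ⟨k, hk, rfl⟩ := hz
    exact h k hk
  | one => simpa using one_mem _
  | mul a b ha hb iha ihb =>
    have e : w⁻¹ * (a * b) * w = (w⁻¹ * a * w) * (w⁻¹ * b * w) := by group
    rw [e]
    exact mul_mem iha ihb
  | inv a ha iha =>
    have e : w⁻¹ * a⁻¹ * w = (w⁻¹ * a * w)⁻¹ := by group
    rw [e]
    exact inv_mem iha


end Aux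

/-- every sequence in `T(J, δ)` eventually stabilizes. -/
theorem stabilization_of_T
    [Fintype I] [Finite W]
    (cs : CoxeterSystem M W) (J : Set I) (δ : I ≃ I)
    (hδM : ∀ i j : I, M (δ i) (δ j) = M i j)
    (Jseq : ℕ → Set I) (wseq : ℕ → W)
    (hT : InT cs J δ Jseq wseq) :
    ∃ N : ℕ, ∀ n : ℕ, N ≤ n → Jseq n = Jseq N ∧ wseq n = wseq N := by
  obtain ⟨hJ0, hJrec, hmin, hcoset⟩ := hT
  -- J is decreasing
  have hmono : ∀ n, Jseq (n + 1) ⊆ Jseq n := by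
    intro n
    rw [hJrec n]
    exact Set.inter_subset_left
  have hchain : ∀ m n, m ≤ n → Jseq n ⊆ Jseq m := by
    intro m n hmn
    induction n, hmn using Nat.le_induction with
    | base => exact subset_rfl
    | succ n hmn ih => exact (hmono n).trans ih
  -- cardinalities stabilize
  obtain ⟨N, hN⟩ : ∃ N, ∀ n, N ≤ n → Jseq n = Jseq N := by
    have hne : (Set.range fun n => (Jseq n).ncard).Nonempty := ⟨(Jseq 0).ncard, 0, rfl⟩
    obtain ⟨N, hNcard⟩ := Nat.sInf_mem hne
    refine ⟨N, fun n hn => ?_⟩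
    refine Set.eq_of_subset_of_ncard_le (hchain N n hn) ?_ (Set.toFinite _)
    have hNcard' : (Jseq N).ncard = sInf (Set.range fun n => (Jseq n).ncard) := hNcard
    rw [hNcard']
    exact Nat.sInf_le ⟨n, rfl⟩
  refine ⟨N, fun n hn => ?_⟩
  have hwstep : ∀ m, N ≤ m → wseq (m + 1) = wseq m := by
    intro m hm
    have hJm : Jseq m = Jseq N := hN m hm
    have hJm1 : Jseq (m + 1) = Jseq N := hN (m + 1) (by omega)
    have hAd : Jseq N ⊆ AdSet cs (wseq m) (δ '' Jseq N) := by
      have := hJrec m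
      rw [hJm1, hJm] at this
      intro k hk
      rw [this] at hk
      exact hk.2
    obtain ⟨x, hx, y, hy, heq⟩ := hcoset m
    rw [hJm1] at hx
    rw [hJm] at hy
    -- conjugate x into the parabolic of δ '' Jseq N
    have hconj : (wseq m)⁻¹ * x * wseq m ∈ parabolic cs (δ '' Jseq N) := by
      refine conj_parabolic_mem cs ?_ hx
      intro k hk
      obtain ⟨j, hj, hjeq⟩ := hAd hk
      have e : (wseq m)⁻¹ * cs.simple k * wseq m = cs.simple j := by
        rw [hjeq]; group
      rw [e]
      exact Subgroup.subset_closure ⟨j, hj, rfl⟩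
    have heq2 : wseq (m + 1) = wseq m * (((wseq m)⁻¹ * x * wseq m) * y) := by
      rw [heq]; group
    have hmem1 : wseq m ∈ minRight cs (δ '' Jseq N) := by
      have := (hmin m).2
      rwa [hJm] at this
    have hmem2 : wseq (m + 1) ∈ minRight cs (δ '' Jseq N) := by
      have := (hmin (m + 1)).2
      rwa [hJm1] at this
    exact minRight_unique cs hmem1 hmem2 (mul_mem hconj hy) heq2
  have hw : wseq n = wseq N := by
    induction n, hn using Nat.le_induction with
    | base => rfl
    | succ n hmn ih => rw [hwstep n hmn, ih]
  exact ⟨hN n hn, hw⟩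

end HePaper
end

section
/- Let w ∈ W^J and let (J_n, w_n)_{n ≥ 0} ∈ T(J, δ) be the sequence corresponding to w under Bédard's bijection (i.e., w_m⁻¹ = w for m sufficiently large). Then for every n ≥ 0, w_n is the unique element of minimal length in the coset w⁻¹ W_{δ(J_n)}. -/
namespace HePaper

variable {I : Type*} {M : CoxeterMatrix I} {W : Type*} [Group W]

section Aux
open Classical

lemma zmodtwo_add_self : ∀ x : ZMod 2, x + x = 0 := by decide

noncomputable def eta (cs : CoxeterSystem M W) (i : I) : Function.End (W × ZMod 2) :=
  fun p => (cs.simple i * p.1 * cs.simple i, p.2 + (if p.1 = cs.simple i then 1 else 0))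

lemma eta_liftable (cs : CoxeterSystem M W) : M.IsLiftable (eta cs) := by
  intro i j
  set q := cs.simple i * cs.simple j with hq
  have hsj : cs.simple j * q * cs.simple j = q⁻¹ := by
    simp [hq, mul_assoc, mul_inv_rev]
  have hjq : q⁻¹ * cs.simple j = cs.simple j * q := by
    rw [← hsj]; exact cs.simple_mul_simple_cancel_right j
  have hconj : ∀ r : ℕ, q⁻¹ * (cs.simple j * q ^ r) * q = cs.simple j * q ^ (r + 2) := by
    intro r
    calc q⁻¹ * (cs.simple j * q ^ r) * q
        = (q⁻¹ * cs.simple j) * (q ^ r * q) := by rw [mul_assoc, mul_assoc, ← mul_assoc q⁻¹]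
      _ = (cs.simple j * q) * q ^ (r+1) := by rw [hjq, pow_succ]
      _ = cs.simple j * q ^ (r+2) := by rw [mul_assoc, ← pow_succ']
  have key : ∀ (k : ℕ) (p : W × ZMod 2), ((eta cs i * eta cs j) ^ k) p =
      (q ^ k * p.1 * (q ^ k)⁻¹,
        p.2 + ∑ r ∈ Finset.range (2 * k), (if p.1 = cs.simple j * q ^ r then 1 else 0)) := by
    intro k
    induction k with
    | zero => intro p; simp; rfl
    | succ k ih =>
      intro p
      have happ : ((eta cs i * eta cs j) ^ (k+1)) p
          = ((eta cs i * eta cs j) ^ k) ((eta cs i * eta cs j) p) := by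
        rw [pow_succ]; rfl
      have hstep : (eta cs i * eta cs j) p
          = (q * p.1 * q⁻¹, p.2 + ((if p.1 = cs.simple j then 1 else 0)
              + (if p.1 = cs.simple j * cs.simple i * cs.simple j then 1 else 0))) := by
        show eta cs i (eta cs j p) = _
        simp only [eta, hq]
        congr 1
        · simp [mul_inv_rev, cs.inv_simple, mul_assoc]
        · have : (cs.simple j * p.1 * cs.simple j = cs.simple i)
              ↔ (p.1 = cs.simple j * cs.simple i * cs.simple j) := by
            constructor
            · intro h; rw [← h]
              simp only [← mul_assoc]
              rw [cs.simple_mul_simple_self, one_mul, cs.simple_mul_simple_cancel_right]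
            · intro h; rw [h]
              simp only [← mul_assoc]
              rw [cs.simple_mul_simple_self, one_mul, cs.simple_mul_simple_cancel_right]
          simp only [this]
          ring
      rw [happ, hstep, ih]
      simp only [Prod.mk.injEq]
      refine ⟨?_, ?_⟩
      · rw [pow_succ, mul_inv_rev]
        simp [hq, mul_inv_rev, cs.inv_simple, mul_assoc]
      · have hsum : ∀ r ∈ Finset.range (2*k),
            (if q * p.1 * q⁻¹ = cs.simple j * q ^ r then (1:ZMod 2) else 0)
              = (if p.1 = cs.simple j * q ^ (r+2) then 1 else 0) := by
          intro r _
          have hiff : (q * p.1 * q⁻¹ = cs.simple j * q ^ r) ↔ (p.1 = cs.simple j * q ^ (r+2)) := by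
            rw [← hconj r]
            constructor
            · intro h; rw [← h]; group
            · intro h
              have : q * p.1 * q⁻¹ = q * (q⁻¹ * (cs.simple j * q ^ r) * q) * q⁻¹ := by rw [← h]
              rw [this]; group
          exact if_congr hiff rfl rfl
        rw [Finset.sum_congr rfl hsum]
        have h2 : 2 * (k+1) = (2*k + 1) + 1 := by ring
        rw [h2, Finset.sum_range_succ', Finset.sum_range_succ']
        have e1 : ∀ x:ℕ, x + 1 + 1 = x + 2 := fun x => rfl
        simp only [e1, zero_add, pow_zero, pow_one, mul_one, hq, ← mul_assoc]
        ring
  have : (eta cs i * eta cs j) ^ (M i j) = 1 := by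
    funext p
    rw [key (M i j) p]
    have hqm : q ^ (M i j) = 1 := cs.simple_mul_simple_pow i j
    have hsplit : ∑ r ∈ Finset.range (2 * M i j), (if p.1 = cs.simple j * q ^ r then (1:ZMod 2) else 0) = 0 := by
      have h2 : 2 * M i j = M i j + M i j := by ring
      rw [h2, Finset.sum_range_add]
      have : ∀ r, (if p.1 = cs.simple j * q ^ (M i j + r) then (1:ZMod 2) else 0)
          = (if p.1 = cs.simple j * q ^ r then 1 else 0) := by
        intro r
        rw [pow_add, hqm, one_mul]
      simp only [this]
      exact zmodtwo_add_self _
    rw [hsplit, hqm]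
    show _ = p
    simp
  exact this

noncomputable def Phi (cs : CoxeterSystem M W) : W →* Function.End (W × ZMod 2) :=
  cs.lift ⟨eta cs, eta_liftable cs⟩

/-- mod-2 tally of occurrences of `t` in a list. -/
noncomputable def tally (t : W) : List W → ZMod 2
  | [] => 0
  | a :: l => (if a = t then 1 else 0) + tally t l

lemma mem_of_tally_ne_zero {t : W} : ∀ {l : List W}, tally t l ≠ 0 → t ∈ l := by
  intro l
  induction l with
  | nil => intro h; exact absurd rfl h
  | cons a l ih =>
    intro h
    by_cases ha : a = t
    · exact ha ▸ (List.mem_cons_self (a := a) (l := l))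
    · rw [tally, if_neg ha, zero_add] at h
      exact List.mem_cons_of_mem a (ih h)

lemma Phi_wordProd (cs : CoxeterSystem M W) (ω : List I) (t : W) (ε : ZMod 2) :
    Phi cs (cs.wordProd ω) (t, ε)
      = (cs.wordProd ω * t * (cs.wordProd ω)⁻¹, ε + tally t (cs.rightInvSeq ω)) := by
  induction ω generalizing ε with
  | nil =>
    rw [cs.wordProd_nil, map_one]
    show (t, ε) = _
    simp [tally]
  | cons i ω ih =>
    rw [cs.wordProd_cons, map_mul]
    show Phi cs (cs.simple i) (Phi cs (cs.wordProd ω) (t, ε)) = _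
    rw [ih]
    have hP : Phi cs (cs.simple i) = eta cs i := CoxeterSystem.lift_apply_simple cs _ i
    rw [hP]
    have hind : (cs.wordProd ω * t * (cs.wordProd ω)⁻¹ = cs.simple i)
        ↔ ((cs.wordProd ω)⁻¹ * cs.simple i * cs.wordProd ω = t) := by
      constructor
      · intro h; rw [← h]; group
      · intro h; rw [← h]; group
    show (cs.simple i * (cs.wordProd ω * t * (cs.wordProd ω)⁻¹) * cs.simple i,
        (ε + tally t (cs.rightInvSeq ω)) + (if cs.wordProd ω * t * (cs.wordProd ω)⁻¹ = cs.simple i then 1 else 0)) = _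
    simp only [Prod.mk.injEq]
    refine ⟨?_, ?_⟩
    · rw [mul_inv_rev, cs.inv_simple]
      simp [mul_assoc]
    · show _ = ε + tally t ((cs.wordProd ω)⁻¹ * cs.simple i * cs.wordProd ω :: cs.rightInvSeq ω)
      rw [tally]
      rw [if_congr hind.symm rfl rfl]
      ring

/-- The mod-2 number of times a reflection `t` is "crossed" by `w`. -/
noncomputable def Nn (cs : CoxeterSystem M W) (w t : W) : ZMod 2 := (Phi cs w (t, 0)).2

lemma Nn_wordProd (cs : CoxeterSystem M W) (ω : List I) (t : W) :
    Nn cs (cs.wordProd ω) t = tally t (cs.rightInvSeq ω) := by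
  rw [Nn, Phi_wordProd, zero_add]

lemma Phi_apply (cs : CoxeterSystem M W) (w t : W) (ε : ZMod 2) :
    Phi cs w (t, ε) = (w * t * w⁻¹, ε + Nn cs w t) := by
  obtain ⟨ω, rfl⟩ := cs.wordProd_surjective w
  rw [Phi_wordProd, Nn_wordProd]

lemma Nn_mul (cs : CoxeterSystem M W) (a b t : W) :
    Nn cs (a * b) t = Nn cs b t + Nn cs a (b * t * b⁻¹) := by
  have : Phi cs (a * b) (t, 0) = Phi cs a (Phi cs b (t, 0)) := by
    rw [map_mul]; rfl
  rw [Nn, this, Phi_apply, Phi_apply]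
  simp

lemma Nn_simple (cs : CoxeterSystem M W) (i : I) (t : W) :
    Nn cs (cs.simple i) t = if t = cs.simple i then 1 else 0 := by
  have hP : Phi cs (cs.simple i) = eta cs i := CoxeterSystem.lift_apply_simple cs _ i
  rw [Nn, hP]
  show 0 + (if t = cs.simple i then 1 else 0) = _
  rw [zero_add]

lemma Nn_inv (cs : CoxeterSystem M W) (u t : W) :
    Nn cs u⁻¹ t = Nn cs u (u⁻¹ * t * u) := by
  have h0 : Nn cs (u * u⁻¹) t = 0 := by rw [mul_inv_cancel]; rw [Nn, map_one]; rfl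
  rw [Nn_mul] at h0
  have : ∀ a b : ZMod 2, a + b = 0 → a = b := by decide
  have := this _ _ h0
  rw [this]
  congr 1
  group

lemma Nn_refl_self (cs : CoxeterSystem M W) {t : W} (ht : cs.IsReflection t) :
    Nn cs t t = 1 := by
  obtain ⟨u, k, rfl⟩ := ht
  have h1 : u * cs.simple k * u⁻¹ = u * (cs.simple k * u⁻¹) := by group
  have h2 : (cs.simple k * u⁻¹) * (u * (cs.simple k * u⁻¹)) * (cs.simple k * u⁻¹)⁻¹
      = cs.simple k := by group
  have h3 : u⁻¹ * (u * (cs.simple k * u⁻¹)) * u = cs.simple k := by group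
  rw [h1, Nn_mul, h2, Nn_mul, inv_inv, h3, Nn_inv, h3, Nn_simple, if_pos rfl]
  have : ∀ a : ZMod 2, a + 1 + a = 1 := by decide
  exact this _

lemma exists_eraseIdx_of_tally (cs : CoxeterSystem M W) {ω : List I} {t : W}
    (h : tally t (cs.rightInvSeq ω) ≠ 0) :
    ∃ j < ω.length, cs.wordProd ω * t = cs.wordProd (ω.eraseIdx j) := by
  have hmem : t ∈ cs.rightInvSeq ω := mem_of_tally_ne_zero h
  obtain ⟨j, hj, hget⟩ := List.mem_iff_getElem.mp hmem
  rw [cs.length_rightInvSeq] at hj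
  refine ⟨j, hj, ?_⟩
  have hgetD : (cs.rightInvSeq ω).getD j 1 = t := by
    rw [List.getD_eq_getElem _ _ (by rw [cs.length_rightInvSeq]; exact hj)]
    exact hget
  rw [← hgetD]
  exact cs.wordProd_mul_getD_rightInvSeq ω j

lemma length_mul_lt_of_Nn_one (cs : CoxeterSystem M W) {w t : W}
    (h : Nn cs w t = 1) : cs.length (w * t) < cs.length w := by
  obtain ⟨ω, hred, rfl⟩ := cs.exists_reduced_word' w
  rw [Nn_wordProd] at h
  obtain ⟨j, hj, heq⟩ := exists_eraseIdx_of_tally cs (by rw [h]; exact one_ne_zero)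
  rw [heq]
  calc cs.length (cs.wordProd (ω.eraseIdx j)) ≤ (ω.eraseIdx j).length :=
        cs.length_wordProd_le _
    _ < ω.length := by rw [List.length_eraseIdx_of_lt hj]; omega
    _ = cs.length (cs.wordProd ω) := hred.symm

lemma Nn_eq_one_of_lt (cs : CoxeterSystem M W) {w t : W} (ht : cs.IsReflection t)
    (h : cs.length (w * t) < cs.length w) : Nn cs w t = 1 := by
  by_contra hne
  have h0 : Nn cs w t = 0 := by
    have : ∀ x : ZMod 2, x ≠ 1 → x = 0 := by decide
    exact this _ hne
  have harg : t * t * t⁻¹ = t := by rw [ht.mul_self, one_mul, ht.inv]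
  have h1 : Nn cs (w * t) t = 1 := by
    rw [Nn_mul, harg, h0, Nn_refl_self cs ht, add_zero]
  have h2 := length_mul_lt_of_Nn_one cs h1
  rw [mul_assoc, ht.mul_self, mul_one] at h2
  omega

/-- Strong exchange property. -/
lemma strong_exchange (cs : CoxeterSystem M W) {ω : List I} (hred : cs.IsReduced ω)
    {t : W} (ht : cs.IsReflection t) (hlt : cs.length (cs.wordProd ω * t) < cs.length (cs.wordProd ω)) :
    ∃ j < ω.length, cs.wordProd ω * t = cs.wordProd (ω.eraseIdx j) := by
  have h1 : Nn cs (cs.wordProd ω) t = 1 := Nn_eq_one_of_lt cs ht hlt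
  rw [Nn_wordProd] at h1
  exact exists_eraseIdx_of_tally cs (by rw [h1]; exact one_ne_zero)

lemma wordProd_mem_parabolic (cs : CoxeterSystem M W) {K : Set I} {ω : List I}
    (hω : ∀ i ∈ ω, i ∈ K) : cs.wordProd ω ∈ parabolic cs K := by
  induction ω with
  | nil => rw [cs.wordProd_nil]; exact one_mem _
  | cons i ω ih =>
    rw [cs.wordProd_cons]
    exact mul_mem (Subgroup.subset_closure ⟨i, hω i (List.mem_cons_self (a := i) (l := ω)), rfl⟩)
      (ih fun j hj => hω j (List.mem_cons_of_mem i hj))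

lemma exists_K_word (cs : CoxeterSystem M W) {K : Set I} {z : W}
    (hz : z ∈ parabolic cs K) : ∃ ω : List I, (∀ i ∈ ω, i ∈ K) ∧ cs.wordProd ω = z := by
  induction hz using Subgroup.closure_induction with
  | mem x hx =>
    obtain ⟨i, hi, rfl⟩ := hx
    exact ⟨[i], by simpa using hi, cs.wordProd_singleton i⟩
  | one => exact ⟨[], by simp, cs.wordProd_nil⟩
  | mul x y hx hy ihx ihy =>
    obtain ⟨ω₁, h₁, rfl⟩ := ihx
    obtain ⟨ω₂, h₂, rfl⟩ := ihy
    exact ⟨ω₁ ++ ω₂, fun i hi => (List.mem_append.mp hi).elim (h₁ i) (h₂ i),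
      cs.wordProd_append ω₁ ω₂⟩
  | inv x hx ihx =>
    obtain ⟨ω, h, rfl⟩ := ihx
    exact ⟨ω.reverse, fun i hi => h i (List.mem_reverse.mp hi), cs.wordProd_reverse ω⟩

lemma exists_reduced_K_word (cs : CoxeterSystem M W) {K : Set I} :
    ∀ (n : ℕ) (ω : List I), ω.length ≤ n → (∀ i ∈ ω, i ∈ K) →
    ∃ ω' : List I, cs.IsReduced ω' ∧ (∀ i ∈ ω', i ∈ K) ∧ cs.wordProd ω' = cs.wordProd ω := by
  intro n
  induction n with
  | zero =>
    intro ω hlen _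
    have : ω = [] := List.length_eq_zero_iff.mp (Nat.le_zero.mp hlen)
    subst this
    exact ⟨[], by simp [CoxeterSystem.IsReduced], by simp, rfl⟩
  | succ n ih =>
    intro ω hlen hK
    by_cases hred : cs.IsReduced ω
    · exact ⟨ω, hred, hK, rfl⟩
    · -- find minimal non-reduced prefix
      have hex : ∃ j, ¬ cs.IsReduced (ω.take (j + 1)) := by
        have hne : ω ≠ [] := by rintro rfl; exact hred (by simp [CoxeterSystem.IsReduced])
        refine ⟨ω.length - 1, ?_⟩
        have : ω.length - 1 + 1 = ω.length := Nat.succ_pred_eq_of_pos (List.length_pos_iff.mpr hne)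
        rw [this, List.take_length]
        exact hred
      let j₀ := Nat.find hex
      have hj₀ : ¬ cs.IsReduced (ω.take (j₀ + 1)) := Nat.find_spec hex
      have hmin : ∀ j < j₀, cs.IsReduced (ω.take (j + 1)) := fun j hj =>
        not_not.mp (Nat.find_min hex hj)
      have hredj₀ : cs.IsReduced (ω.take j₀) := by
        cases' Nat.eq_zero_or_pos j₀ with h h
        · rw [h]; simp [CoxeterSystem.IsReduced]
        · have h2 := hmin (j₀ - 1) (by omega)
          have : j₀ - 1 + 1 = j₀ := by omega
          rwa [this] at h2
      have hj₀lt : j₀ < ω.length := by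
        by_contra hc
        push_neg at hc
        rw [List.take_of_length_le (by omega)] at hj₀
        -- then take j₀ = ω as well, but take (j₀+1) = ω non reduced — need contradiction:
        -- ω.take j₀ = ω is reduced (hredj₀), contradiction with hj₀
        rw [List.take_of_length_le hc] at hredj₀
        exact hj₀ hredj₀
      set i := ω.get ⟨j₀, hj₀lt⟩ with hidef
      have htake : ω.take (j₀ + 1) = ω.take j₀ ++ [i] := by
        rw [List.take_succ]
        congr 1
        rw [List.getElem?_eq_getElem hj₀lt]
        rfl
      have hlentake : (ω.take j₀).length = j₀ := by
        rw [List.length_take]; omega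
      have hlu : cs.length (cs.wordProd (ω.take j₀)) = j₀ := by
        rw [hredj₀]; exact hlentake
      have hltlen : cs.length (cs.wordProd (ω.take j₀) * cs.simple i) < cs.length (cs.wordProd (ω.take j₀)) := by
        have hd := cs.length_mul_simple (cs.wordProd (ω.take j₀)) i
        have hne : cs.length (cs.wordProd (ω.take (j₀+1))) ≠ j₀ + 1 := by
          intro hc
          exact hj₀ (by rw [CoxeterSystem.IsReduced, hc, List.length_take]; omega)
        rw [htake, cs.wordProd_append, cs.wordProd_singleton] at hne
        rw [hlu] at hd ⊢
        rcases hd with hd | hd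
        · exact absurd hd hne
        · have hj0pos : cs.length (cs.wordProd (ω.take j₀) * cs.simple i) ≠ cs.length (cs.wordProd (ω.take j₀)) :=
            cs.length_mul_simple_ne _ i
          rw [hlu] at hj0pos
          omega
      obtain ⟨r, hr, hrw⟩ := strong_exchange cs hredj₀ (cs.isReflection_simple i) hltlen
      set ω₂ := (ω.take j₀).eraseIdx r ++ ω.drop (j₀ + 1) with hω₂
      have hprod : cs.wordProd ω₂ = cs.wordProd ω := by
        rw [hω₂, cs.wordProd_append, ← hrw]
        conv_rhs => rw [← List.take_append_drop (j₀ + 1) ω]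
        rw [cs.wordProd_append, htake, cs.wordProd_append, cs.wordProd_singleton]
      have hlen₂ : ω₂.length ≤ n := by
        rw [hω₂, List.length_append, List.length_eraseIdx_of_lt hr, hlentake, List.length_drop]
        omega
      have hK₂ : ∀ k ∈ ω₂, k ∈ K := by
        intro k hk
        rcases List.mem_append.mp hk with h | h
        · exact hK k (List.mem_of_mem_take ((List.eraseIdx_sublist _ r).mem h))
        · exact hK k (List.mem_of_mem_drop h)
      obtain ⟨ω', h1, h2, h3⟩ := ih ω₂ hlen₂ hK₂
      exact ⟨ω', h1, h2, by rw [h3, hprod]⟩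

lemma min_coset_length_add (cs : CoxeterSystem M W) {K : Set I} {v : W}
    (hvmin : ∀ z ∈ parabolic cs K, cs.length v ≤ cs.length (v * z)) :
    ∀ z ∈ parabolic cs K, cs.length (v * z) = cs.length v + cs.length z := by
  suffices h : ∀ (m : ℕ) (z : W), z ∈ parabolic cs K → cs.length z = m →
      cs.length (v * z) = cs.length v + cs.length z by
    intro z hz; exact h (cs.length z) z hz rfl
  intro m
  induction m using Nat.strong_induction_on with
  | _ m ihm =>
  intro z hz hm
  rcases Nat.eq_zero_or_pos m with h0 | hpos
  · have : z = 1 := cs.length_eq_zero_iff.mp (by omega)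
    subst this; simp
  -- get a reduced K-word for z
  obtain ⟨ω0, hωK, hω0⟩ := exists_K_word cs hz
  obtain ⟨ζ, hζred, hζK, hζprod⟩ := exists_reduced_K_word cs ω0.length ω0 le_rfl hωK
  rw [hω0] at hζprod
  have hζlen : ζ.length = m := by rw [← hm, ← hζprod]; exact hζred.symm
  have hζne : ζ ≠ [] := by intro hc; rw [hc] at hζlen; simp at hζlen; omega
  set i := ζ.getLast hζne with hi
  set ζ' := ζ.dropLast with hζ'
  have hsplit : ζ' ++ [i] = ζ := List.dropLast_append_getLast hζne
  have hζ'len : ζ'.length = m - 1 := by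
    rw [hζ', List.length_dropLast, hζlen]
  have hζ'red : cs.IsReduced ζ' := by
    have : ζ' = ζ.take (ζ.length - 1) := by rw [hζ', List.dropLast_eq_take]
    rw [this]; exact hζred.take _
  have hζ'K : ∀ k ∈ ζ', k ∈ K := fun k hk => hζK k ((List.dropLast_sublist ζ).subset hk)
  have hiK : i ∈ K := hζK i (ζ.getLast_mem hζne)
  set z' := cs.wordProd ζ' with hz'
  have hz'mem : z' ∈ parabolic cs K := wordProd_mem_parabolic cs hζ'K
  have hz'len : cs.length z' = m - 1 := by rw [hz', hζ'red, hζ'len]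
  have hzz' : z = z' * cs.simple i := by
    rw [← hζprod, ← hsplit, cs.wordProd_append, cs.wordProd_singleton]
  have ihz' : cs.length (v * z') = cs.length v + cs.length z' :=
    ihm (m - 1) (by omega) z' hz'mem hz'len
  rcases cs.length_mul_simple (v * z') i with hcase | hcase
  · -- ascent: done
    have hvz : cs.length (v * z) = cs.length (v * z') + 1 := by
      rw [hzz', ← mul_assoc, hcase]
    rw [hvz, ihz', hz'len, hm]
    omega
  · -- descent: contradiction
    exfalso
    obtain ⟨υ, hυred, hυ⟩ := cs.exists_reduced_word' v
    have hυlen : υ.length = cs.length v := by rw [hυ]; exact hυred.symm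
    set χ := υ ++ ζ' with hχ
    have hχprod : cs.wordProd χ = v * z' := by
      rw [hχ, cs.wordProd_append, ← hυ, hz']
    have hχred : cs.IsReduced χ := by
      rw [CoxeterSystem.IsReduced, hχprod, ihz', List.length_append, hυlen, hζ'len, hz'len]
    have hlt : cs.length (cs.wordProd χ * cs.simple i) < cs.length (cs.wordProd χ) := by
      rw [hχprod]
      omega
    obtain ⟨r, hr, hrw⟩ := strong_exchange cs hχred (cs.isReflection_simple i) hlt
    rw [hχprod] at hrw
    rcases Nat.lt_or_ge r υ.length with hru | hru
    · -- erase in the υ part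
      rw [hχ, List.eraseIdx_append_of_lt_length hru, cs.wordProd_append] at hrw
      have h' : cs.wordProd (υ.eraseIdx r) * z' = v * z' * cs.simple i := by
        rw [hz']
        exact hrw.symm
      have hz'' : v * (z' * cs.simple i * z'⁻¹) = cs.wordProd (υ.eraseIdx r) := by
        have h2 : v * (z' * cs.simple i * z'⁻¹) * z' = cs.wordProd (υ.eraseIdx r) * z' := by
          rw [h']
          group
        exact mul_right_cancel h2
      have hmem'' : z' * cs.simple i * z'⁻¹ ∈ parabolic cs K :=
        mul_mem (mul_mem hz'mem (Subgroup.subset_closure ⟨i, hiK, rfl⟩)) (inv_mem hz'mem)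
      have hle := hvmin _ hmem''
      rw [hz''] at hle
      have : cs.length (cs.wordProd (υ.eraseIdx r)) ≤ (υ.eraseIdx r).length :=
        cs.length_wordProd_le _
      rw [List.length_eraseIdx_of_lt hru] at this
      omega
    · -- erase in the ζ' part
      rw [hχ, List.eraseIdx_append_of_length_le hru, cs.wordProd_append] at hrw
      have hcancel : z' * cs.simple i = cs.wordProd (ζ'.eraseIdx (r - υ.length)) := by
        have h5 := hrw
        rw [mul_assoc, ← hυ] at h5
        exact mul_left_cancel h5
      have hrζ : r - υ.length < ζ'.length := by
        rw [hχ, List.length_append] at hr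
        omega
      have : cs.length (z' * cs.simple i) ≤ (ζ'.eraseIdx (r - υ.length)).length := by
        rw [hcancel]; exact cs.length_wordProd_le _
      rw [List.length_eraseIdx_of_lt hrζ] at this
      rw [← hzz'] at this
      rw [hζ'len] at this hrζ
      omega

lemma minRight_length_lt (cs : CoxeterSystem M W) {K : Set I} {v : W}
    (hv : ∀ j ∈ K, cs.length v < cs.length (v * cs.simple j))
    {z : W} (hz : z ∈ parabolic cs K) (hzne : z ≠ 1) :
    cs.length v < cs.length (v * z) := by
  -- take an element of minimal length in the coset v * W_K
  have hex : ∃ n : ℕ, ∃ z₀ ∈ parabolic cs K, cs.length (v * z₀) = n :=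
    ⟨cs.length v, 1, one_mem _, by rw [mul_one]⟩
  classical
  let n₀ := Nat.find hex
  obtain ⟨z₀, hz₀mem, hz₀len⟩ := Nat.find_spec hex
  set v₀ := v * z₀ with hv₀
  have hvmin : ∀ z' ∈ parabolic cs K, cs.length v₀ ≤ cs.length (v₀ * z') := by
    intro z' hz'
    have hmem : z₀ * z' ∈ parabolic cs K := mul_mem hz₀mem hz'
    have h1 : Nat.find hex ≤ cs.length (v * (z₀ * z')) := Nat.find_min' hex ⟨z₀ * z', hmem, rfl⟩
    have h3 : v * (z₀ * z') = v₀ * z' := by rw [hv₀, mul_assoc]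
    rw [hz₀len, ← h3]
    exact h1
  have hadd := min_coset_length_add cs hvmin
  have hvcoset : v = v₀ * z₀⁻¹ := by rw [hv₀]; group
  have hz₀inv : z₀⁻¹ ∈ parabolic cs K := inv_mem hz₀mem
  have hlv : cs.length v = cs.length v₀ + cs.length z₀⁻¹ := by
    rw [hvcoset]; exact hadd _ hz₀inv
  have hz₀1 : z₀⁻¹ = 1 := by
    by_contra hc
    -- take reduced K-word of z₀⁻¹, nonempty; last letter i
    obtain ⟨ω0, hωK, hω0⟩ := exists_K_word cs hz₀inv
    obtain ⟨ζ, hζred, hζK, hζprod⟩ := exists_reduced_K_word cs ω0.length ω0 le_rfl hωK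
    rw [hω0] at hζprod
    have hζne : ζ ≠ [] := by
      intro hc2; rw [hc2, cs.wordProd_nil] at hζprod; exact hc hζprod.symm
    set i := ζ.getLast hζne with hi
    set ζ' := ζ.dropLast with hζ'
    have hsplit : ζ' ++ [i] = ζ := List.dropLast_append_getLast hζne
    have hζ'red : cs.IsReduced ζ' := by
      have : ζ' = ζ.take (ζ.length - 1) := by rw [hζ', List.dropLast_eq_take]
      rw [this]; exact hζred.take _
    have hiK : i ∈ K := hζK i (ζ.getLast_mem hζne)
    have hsi : z₀⁻¹ * cs.simple i = cs.wordProd ζ' * cs.simple i * cs.simple i := by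
      rw [← hζprod, ← hsplit, cs.wordProd_append, cs.wordProd_singleton]
    rw [cs.simple_mul_simple_cancel_right] at hsi
    have hmem' : z₀⁻¹ * cs.simple i ∈ parabolic cs K :=
      mul_mem hz₀inv (Subgroup.subset_closure ⟨i, hiK, rfl⟩)
    have h1 : cs.length (v * cs.simple i) = cs.length v₀ + cs.length (z₀⁻¹ * cs.simple i) := by
      have : v * cs.simple i = v₀ * (z₀⁻¹ * cs.simple i) := by rw [hvcoset]; group
      rw [this]; exact hadd _ hmem'
    have h2 : cs.length (z₀⁻¹ * cs.simple i) < cs.length z₀⁻¹ := by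
      rw [hsi, hζ'red]
      have : cs.length z₀⁻¹ = ζ.length := by rw [← hζprod]; exact hζred
      rw [this, hζ', List.length_dropLast]
      have : ζ.length ≠ 0 := by simpa using hζne
      omega
    have h3 := hv i hiK
    omega
  rw [hz₀1, mul_one] at hvcoset
  rw [← hvcoset] at hadd
  rw [hadd z hz]
  have : cs.length z ≠ 0 := fun hc => hzne (cs.length_eq_zero_iff.mp hc)
  omega

lemma parabolic_mono (cs : CoxeterSystem M W) {K K' : Set I} (h : K ⊆ K') :
    parabolic cs K ≤ parabolic cs K' :=
  Subgroup.closure_mono (Set.image_mono h)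

lemma conj_parabolic (cs : CoxeterSystem M W) {K₁ K₂ : Set I} {g : W}
    (hgen : ∀ k ∈ K₁, ∃ j ∈ K₂, cs.simple k = g * cs.simple j * g⁻¹)
    {x : W} (hx : x ∈ parabolic cs K₁) :
    g⁻¹ * x * g ∈ parabolic cs K₂ := by
  induction hx using Subgroup.closure_induction with
  | mem y hy =>
    obtain ⟨k, hk, rfl⟩ := hy
    obtain ⟨j, hj, hjk⟩ := hgen k hk
    have : g⁻¹ * cs.simple k * g = cs.simple j := by rw [hjk]; group
    rw [this]
    exact Subgroup.subset_closure ⟨j, hj, rfl⟩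
  | one => simpa using one_mem _
  | mul a b _ _ iha ihb =>
    have : g⁻¹ * (a * b) * g = (g⁻¹ * a * g) * (g⁻¹ * b * g) := by group
    rw [this]
    exact mul_mem iha ihb
  | inv a _ iha =>
    have : g⁻¹ * a⁻¹ * g = (g⁻¹ * a * g)⁻¹ := by group
    rw [this]
    exact inv_mem iha

end Aux

/-- if `(J_n, w_n)_{n ≥ 0} ∈ T(J, δ)` corresponds to `w ∈ W^J`, then each `w_n`
is the unique element of minimal length in the coset `w⁻¹ W_{δ(J_n)}`. -/
theorem corresponding_sequence_coset_min
    [Fintype I] [Finite W]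
    (cs : CoxeterSystem M W) (J : Set I) (δ : I ≃ I)
    (hδM : ∀ i j : I, M (δ i) (δ j) = M i j)
    (w : W) (hw : w ∈ minRight cs J)
    (Jseq : ℕ → Set I) (wseq : ℕ → W)
    (hT : InT cs J δ Jseq wseq)
    (hcorr : ∃ N : ℕ, ∀ n : ℕ, N ≤ n → (wseq n)⁻¹ = w) :
    ∀ n : ℕ,
      (∃ y ∈ parabolic cs (δ '' Jseq n), wseq n = w⁻¹ * y) ∧
      (∀ u : W, (∃ y ∈ parabolic cs (δ '' Jseq n), u = w⁻¹ * y) → u ≠ wseq n →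
        cs.length (wseq n) < cs.length u) := by
  classical
  obtain ⟨hT0, hTb, hTc, hTd⟩ := hT
  obtain ⟨N, hN⟩ := hcorr
  have hJdec : ∀ n, Jseq (n+1) ⊆ Jseq n := fun n => by
    rw [hTb n]; exact Set.inter_subset_left
  have P : ∀ n, ∃ y ∈ parabolic cs (δ '' Jseq n), wseq n = w⁻¹ * y := by
    have key : ∀ (d n : ℕ), N ≤ n + d → ∃ y ∈ parabolic cs (δ '' Jseq n), wseq n = w⁻¹ * y := by
      intro d
      induction d with
      | zero =>
        intro n hn
        refine ⟨1, one_mem _, ?_⟩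
        rw [mul_one, ← hN n (by omega), inv_inv]
      | succ d ihd =>
        intro n hn
        by_cases hNn : N ≤ n
        · exact ⟨1, one_mem _, by rw [mul_one, ← hN n hNn, inv_inv]⟩
        · obtain ⟨y'', hy'', hw1⟩ := ihd (n+1) (by omega)
          obtain ⟨x, hx, y, hy, hd⟩ := hTd n
          have hz : (wseq n)⁻¹ * x * wseq n ∈ parabolic cs (δ '' Jseq n) := by
            refine conj_parabolic cs ?_ hx
            intro k hk
            have hk2 : k ∈ AdSet cs (wseq n) (δ '' Jseq n) := by
              have := hTb n ▸ hk
              exact this.2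
            exact hk2
          set z := (wseq n)⁻¹ * x * wseq n with hzdef
          have hy''n : y'' ∈ parabolic cs (δ '' Jseq n) :=
            parabolic_mono cs (Set.image_mono (hJdec n)) hy''
          refine ⟨y'' * y⁻¹ * z⁻¹, mul_mem (mul_mem hy''n (inv_mem hy)) (inv_mem hz), ?_⟩
          have h1 : wseq (n+1) = wseq n * z * y := by
            rw [hd, hzdef]; group
          have h2 : wseq n = wseq (n+1) * y⁻¹ * z⁻¹ := by rw [h1]; group
          rw [h2, hw1]; group
    intro n; exact key N n (by omega)
  intro n
  obtain ⟨y, hy, hwn⟩ := P n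
  refine ⟨⟨y, hy, hwn⟩, ?_⟩
  rintro u ⟨y', hy', hu⟩ hune
  have hmr : wseq n ∈ minRight cs (δ '' Jseq n) := (hTc n).2
  have hzmem : y⁻¹ * y' ∈ parabolic cs (δ '' Jseq n) := mul_mem (inv_mem hy) hy'
  have hzne : y⁻¹ * y' ≠ 1 := by
    intro hc
    apply hune
    have hyy : y' = y := by
      have := congrArg (fun a => y * a) hc
      simpa [mul_assoc] using this
    rw [hu, hyy, ← hwn]
  have hueq : u = wseq n * (y⁻¹ * y') := by rw [hu, hwn]; group
  rw [hueq]
  exact minRight_length_lt cs hmr hzmem hzne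

end HePaper
end

section
/- For w, w' ∈ W, one has w ≈_{J,δ} w' if and only if both w →_{J,δ} w' and w' →_{J,δ} w. -/
namespace HePaper

variable {I : Type*} {M : CoxeterMatrix I} {W : Type*} [Group W]

section SignRep

open List CoxeterSystem

variable (cs : CoxeterSystem M W)

lemma conj_conj_simple (j : I) (x : W) :
    cs.simple j * (cs.simple j * x * cs.simple j) * cs.simple j = x := by
  rw [mul_assoc (cs.simple j) x, cs.simple_mul_simple_cancel_left,
    cs.simple_mul_simple_cancel_right]

lemma simple_conj_eq_iff (j : I) (t x : W) :
    cs.simple j * t * cs.simple j = x ↔ t = cs.simple j * x * cs.simple j := by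
  constructor
  · rintro rfl
    exact (conj_conj_simple cs j t).symm
  · rintro rfl
    exact conj_conj_simple cs j x

lemma simple_conj_simple_iff (i : I) (t : W) :
    cs.simple i * t * cs.simple i = cs.simple i ↔ t = cs.simple i := by
  rw [simple_conj_eq_iff, cs.simple_mul_simple_self, one_mul]

open Classical in
/-- The function underlying the sign permutation attached to a simple reflection. -/
noncomputable def signFun (i : I) : W × ℤˣ → W × ℤˣ :=
  fun p => (cs.simple i * p.1 * cs.simple i, if p.1 = cs.simple i then -p.2 else p.2)

lemma signFun_involutive (i : I) : Function.Involutive (signFun cs i) := by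
  rintro ⟨t, e⟩
  unfold signFun
  dsimp only
  refine Prod.ext (conj_conj_simple cs i t) ?_
  dsimp only
  by_cases h : t = cs.simple i
  · rw [if_pos ((simple_conj_simple_iff cs i t).mpr h), if_pos h, neg_neg]
  · rw [if_neg (fun hc => h ((simple_conj_simple_iff cs i t).mp hc)), if_neg h]

/-- The sign permutation attached to a simple reflection. -/
noncomputable def signPerm (i : I) : Equiv.Perm (W × ℤˣ) :=
  (signFun_involutive cs i).toPerm

lemma signPerm_apply (i : I) (p : W × ℤˣ) : signPerm cs i p = signFun cs i p := rfl

open Classical in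
lemma signPerm_mul_apply (i j : I) (p : W × ℤˣ) :
    (signPerm cs i * signPerm cs j) p =
      ((cs.simple i * cs.simple j) * p.1 * (cs.simple i * cs.simple j)⁻¹,
        ((if p.1 = cs.simple j then (-1 : ℤˣ) else 1) *
         (if p.1 = cs.simple j * cs.simple i * cs.simple j then (-1 : ℤˣ) else 1)) * p.2) := by
  obtain ⟨t, e⟩ := p
  rw [Equiv.Perm.mul_apply, signPerm_apply, signPerm_apply]
  unfold signFun
  dsimp only
  refine Prod.ext ?_ ?_
  · dsimp only
    rw [mul_inv_rev, cs.inv_simple, cs.inv_simple]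
    simp only [mul_assoc]
  · dsimp only
    have hc : (cs.simple j * t * cs.simple j = cs.simple i) ↔
        (t = cs.simple j * cs.simple i * cs.simple j) := simple_conj_eq_iff cs j t _
    rw [if_congr hc rfl rfl]
    split_ifs <;> simp

lemma conj_e_step (i j : I) (x : W) (k : ℕ)
    (hx : x = (cs.simple j * cs.simple i) ^ k * cs.simple j) :
    (cs.simple i * cs.simple j)⁻¹ * x * (cs.simple i * cs.simple j) =
      (cs.simple j * cs.simple i) ^ (k + 2) * cs.simple j := by
  subst hx
  rw [mul_inv_rev, cs.inv_simple, cs.inv_simple,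
    show k + 2 = 1 + k + 1 by ring, pow_add, pow_add, pow_one]
  simp only [mul_assoc]

lemma key_conj_pow (i j : I) (m : ℕ) :
    ((cs.simple i * cs.simple j) ^ m)⁻¹ * cs.simple j * (cs.simple i * cs.simple j) ^ m =
      (cs.simple j * cs.simple i) ^ (2 * m) * cs.simple j := by
  induction m with
  | zero => simp
  | succ m ih =>
    rw [pow_succ (cs.simple i * cs.simple j) m, mul_inv_rev]
    calc (cs.simple i * cs.simple j)⁻¹ * ((cs.simple i * cs.simple j) ^ m)⁻¹ * cs.simple j *
          ((cs.simple i * cs.simple j) ^ m * (cs.simple i * cs.simple j))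
        = (cs.simple i * cs.simple j)⁻¹ *
            (((cs.simple i * cs.simple j) ^ m)⁻¹ * cs.simple j * (cs.simple i * cs.simple j) ^ m) *
            (cs.simple i * cs.simple j) := by simp only [mul_assoc]
      _ = (cs.simple j * cs.simple i) ^ (2 * m + 2) * cs.simple j := conj_e_step cs i j _ _ ih
      _ = (cs.simple j * cs.simple i) ^ (2 * (m + 1)) * cs.simple j := by ring_nf

lemma key_conj_pow' (i j : I) (m : ℕ) :
    ((cs.simple i * cs.simple j) ^ m)⁻¹ * (cs.simple j * cs.simple i * cs.simple j) *
      (cs.simple i * cs.simple j) ^ m =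
      (cs.simple j * cs.simple i) ^ (2 * m + 1) * cs.simple j := by
  induction m with
  | zero => simp [pow_one]
  | succ m ih =>
    rw [pow_succ (cs.simple i * cs.simple j) m, mul_inv_rev]
    calc (cs.simple i * cs.simple j)⁻¹ * ((cs.simple i * cs.simple j) ^ m)⁻¹ *
          (cs.simple j * cs.simple i * cs.simple j) *
          ((cs.simple i * cs.simple j) ^ m * (cs.simple i * cs.simple j))
        = (cs.simple i * cs.simple j)⁻¹ *
            (((cs.simple i * cs.simple j) ^ m)⁻¹ * (cs.simple j * cs.simple i * cs.simple j) *
              (cs.simple i * cs.simple j) ^ m) *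
            (cs.simple i * cs.simple j) := by simp only [mul_assoc]
      _ = (cs.simple j * cs.simple i) ^ (2 * m + 1 + 2) * cs.simple j := conj_e_step cs i j _ _ ih
      _ = (cs.simple j * cs.simple i) ^ (2 * (m + 1) + 1) * cs.simple j := by ring_nf

lemma conj_pow_eq_iff (a x t : W) (m : ℕ) :
    a ^ m * t * (a ^ m)⁻¹ = x ↔ t = (a ^ m)⁻¹ * x * a ^ m := by
  constructor
  · rintro rfl; group
  · rintro rfl; group

open Classical in
lemma signPerm_pow_apply (i j : I) (m : ℕ) (p : W × ℤˣ) :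
    ((signPerm cs i * signPerm cs j) ^ m) p =
      ((cs.simple i * cs.simple j) ^ m * p.1 * ((cs.simple i * cs.simple j) ^ m)⁻¹,
        (∏ k ∈ Finset.range (2 * m),
          (if p.1 = (cs.simple j * cs.simple i) ^ k * cs.simple j then (-1 : ℤˣ) else 1)) * p.2) := by
  obtain ⟨t, e⟩ := p
  induction m with
  | zero => simp
  | succ m ih =>
    rw [pow_succ' (signPerm cs i * signPerm cs j) m, Equiv.Perm.mul_apply, ih,
      signPerm_mul_apply]
    refine Prod.ext ?_ ?_
    · dsimp only
      rw [pow_succ' (cs.simple i * cs.simple j) m]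
      simp only [mul_inv_rev, mul_assoc]
    · dsimp only
      have hc1 : ((cs.simple i * cs.simple j) ^ m * t * ((cs.simple i * cs.simple j) ^ m)⁻¹ =
          cs.simple j) ↔ (t = (cs.simple j * cs.simple i) ^ (2 * m) * cs.simple j) := by
        rw [conj_pow_eq_iff, key_conj_pow]
      have hc2 : ((cs.simple i * cs.simple j) ^ m * t * ((cs.simple i * cs.simple j) ^ m)⁻¹ =
          cs.simple j * cs.simple i * cs.simple j) ↔
          (t = (cs.simple j * cs.simple i) ^ (2 * m + 1) * cs.simple j) := by
        rw [conj_pow_eq_iff, key_conj_pow']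
      rw [show 2 * (m + 1) = (2 * m + 1) + 1 by ring, Finset.prod_range_succ,
        Finset.prod_range_succ]
      rw [if_congr hc1 rfl rfl, if_congr hc2 rfl rfl]
      simp only [mul_assoc, mul_comm, mul_left_comm]

lemma signPerm_liftable : CoxeterMatrix.IsLiftable M (fun i => signPerm cs i) := by
  classical
  intro i j
  apply Equiv.ext
  intro p
  rw [Equiv.Perm.one_apply, signPerm_pow_apply]
  have h1 : (cs.simple i * cs.simple j) ^ M i j = 1 := cs.simple_mul_simple_pow i j
  have h2 : (cs.simple j * cs.simple i) ^ M i j = 1 := cs.simple_mul_simple_pow' i j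
  have hsh : ∀ k : ℕ,
      (if p.1 = (cs.simple j * cs.simple i) ^ (M i j + k) * cs.simple j then (-1 : ℤˣ) else 1) =
      (if p.1 = (cs.simple j * cs.simple i) ^ k * cs.simple j then (-1 : ℤˣ) else 1) :=
    fun k => by rw [pow_add, h2, one_mul]
  have hcongr : (∏ k ∈ Finset.range (M i j),
      (if p.1 = (cs.simple j * cs.simple i) ^ (M i j + k) * cs.simple j then (-1 : ℤˣ) else 1)) =
      ∏ k ∈ Finset.range (M i j),
      (if p.1 = (cs.simple j * cs.simple i) ^ k * cs.simple j then (-1 : ℤˣ) else 1) :=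
    Finset.prod_congr rfl (fun k _ => hsh k)
  have hprod : (∏ k ∈ Finset.range (2 * M i j),
      (if p.1 = (cs.simple j * cs.simple i) ^ k * cs.simple j then (-1 : ℤˣ) else 1)) = 1 := by
    rw [two_mul, Finset.prod_range_add, hcongr]
    exact Int.units_mul_self _
  rw [h1, hprod]
  simp

/-- The sign representation of the Coxeter group. -/
noncomputable def signHom : W →* Equiv.Perm (W × ℤˣ) :=
  cs.lift ⟨fun i => signPerm cs i, signPerm_liftable cs⟩

open Classical in
/-- The product of signs of occurrences of `t` in a list. -/
noncomputable def listSign (t : W) (L : List W) : ℤˣ :=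
  (L.map fun x => if t = x then (-1 : ℤˣ) else 1).prod

open Classical in
lemma listSign_nil (t : W) : listSign t ([] : List W) = 1 := rfl

open Classical in
lemma listSign_cons (t x : W) (L : List W) :
    listSign t (x :: L) = (if t = x then (-1 : ℤˣ) else 1) * listSign t L := by
  simp [listSign]

open Classical in
lemma listSign_concat (t x : W) (L : List W) :
    listSign t (L.concat x) = listSign t L * (if t = x then (-1 : ℤˣ) else 1) := by
  simp [listSign, List.concat_eq_append]

lemma listSign_eq_one_of_not_mem {t : W} {L : List W} (h : t ∉ L) : listSign t L = 1 := by
  induction L with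
  | nil => rfl
  | cons x L ih =>
    rw [listSign_cons, if_neg (fun he => h (by rw [he]; exact List.mem_cons_self)),
      ih (fun hm => h (List.mem_cons_of_mem x hm)), one_mul]

lemma mem_of_listSign_ne_one {t : W} {L : List W} (h : listSign t L ≠ 1) : t ∈ L := by
  by_contra hm
  exact h (listSign_eq_one_of_not_mem hm)

lemma rightInvSeq_cons (i : I) (ω : List I) :
    cs.rightInvSeq (i :: ω) =
      ((cs.wordProd ω)⁻¹ * cs.simple i * cs.wordProd ω) :: cs.rightInvSeq ω := rfl

open Classical in
lemma signHom_wordProd (ω : List I) (p : W × ℤˣ) :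
    signHom cs (cs.wordProd ω) p =
      (cs.wordProd ω * p.1 * (cs.wordProd ω)⁻¹, listSign p.1 (cs.rightInvSeq ω) * p.2) := by
  obtain ⟨t, e⟩ := p
  induction ω with
  | nil => simp [listSign_nil]
  | cons i ω ih =>
    rw [cs.wordProd_cons, map_mul, Equiv.Perm.mul_apply, ih]
    have hs : signHom cs (cs.simple i) = signPerm cs i := by
      unfold signHom
      exact cs.lift_apply_simple _ i
    rw [hs, signPerm_apply]
    unfold signFun
    dsimp only
    refine Prod.ext ?_ ?_
    · dsimp only
      rw [mul_inv_rev, cs.inv_simple]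
      simp only [mul_assoc]
    · dsimp only
      rw [rightInvSeq_cons, listSign_cons]
      have hc : (cs.wordProd ω * t * (cs.wordProd ω)⁻¹ = cs.simple i) ↔
          (t = (cs.wordProd ω)⁻¹ * cs.simple i * cs.wordProd ω) := by
        constructor
        · intro h
          rw [← h]
          group
        · rintro rfl
          group
      by_cases h : t = (cs.wordProd ω)⁻¹ * cs.simple i * cs.wordProd ω
      · rw [if_pos (hc.mpr h), if_pos h, neg_one_mul, neg_mul]
      · rw [if_neg (fun hx => h (hc.mp hx)), if_neg h, one_mul]

lemma listSign_eq_of_wordProd_eq {ω ω' : List I} (h : cs.wordProd ω = cs.wordProd ω') (t : W) :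
    listSign t (cs.rightInvSeq ω) = listSign t (cs.rightInvSeq ω') := by
  have h1 := signHom_wordProd cs ω (t, 1)
  have h2 := signHom_wordProd cs ω' (t, 1)
  rw [h] at h1
  have := congrArg Prod.snd (h1.symm.trans h2)
  simpa using this

open Classical in
lemma listSign_map_conj (j : I) (L : List W) :
    listSign (cs.simple j) (List.map (MulAut.conj (cs.simple j)) L) =
      listSign (cs.simple j) L := by
  induction L with
  | nil => rfl
  | cons x L ih =>
    rw [List.map_cons, listSign_cons, listSign_cons, ih]
    congr 1
    have hiff : (cs.simple j = MulAut.conj (cs.simple j) x) ↔ (cs.simple j = x) := by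
      rw [MulAut.conj_apply, cs.inv_simple]
      constructor
      · intro h
        have h2 := congrArg (fun z => cs.simple j * z * cs.simple j) h
        rw [conj_conj_simple, cs.simple_mul_simple_self, one_mul] at h2
        exact h2
      · rintro rfl
        rw [cs.simple_mul_simple_self, one_mul]
    rw [if_congr hiff rfl rfl]

lemma simple_mem_rightInvSeq (ω : List I) (hω : cs.IsReduced ω) (j : I)
    (h : cs.length (cs.wordProd ω * cs.simple j) < cs.length (cs.wordProd ω)) :
    cs.simple j ∈ cs.rightInvSeq ω := by
  apply mem_of_listSign_ne_one
  obtain ⟨ω', hlen', hprod'⟩ := cs.exists_reduced_word (cs.wordProd ω * cs.simple j)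
  have hred' : cs.IsReduced ω' := by
    exact hlen'
  have hπ : cs.wordProd (ω'.concat j) = cs.wordProd ω := by
    rw [cs.wordProd_concat, ← hprod', cs.simple_mul_simple_cancel_right]
  have hnot : cs.simple j ∉ cs.rightInvSeq ω' := by
    intro hm
    have hinv := (cs.isRightInversion_of_mem_rightInvSeq hred' hm).2
    rw [← hprod', cs.simple_mul_simple_cancel_right] at hinv
    omega
  have h1 : listSign (cs.simple j) (cs.rightInvSeq ω) =
      listSign (cs.simple j) (cs.rightInvSeq (ω'.concat j)) :=
    listSign_eq_of_wordProd_eq cs hπ.symm _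
  rw [cs.rightInvSeq_concat, List.concat_eq_append, ← List.concat_eq_append, listSign_concat,
    listSign_map_conj, listSign_eq_one_of_not_mem hnot, if_pos rfl, one_mul] at h1
  rw [h1]
  intro hcontra
  have := congrArg (Units.val) hcontra
  simp at this

lemma exchange_right (ω : List I) (hω : cs.IsReduced ω) (j : I)
    (h : cs.length (cs.wordProd ω * cs.simple j) < cs.length (cs.wordProd ω)) :
    ∃ k < ω.length, cs.wordProd ω * cs.simple j = cs.wordProd (ω.eraseIdx k) := by
  have hmem := simple_mem_rightInvSeq cs ω hω j h
  obtain ⟨k, hk, hgot⟩ := List.getElem_of_mem hmem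
  refine ⟨k, by simpa using hk, ?_⟩
  have heq := cs.wordProd_mul_getD_rightInvSeq ω k
  rw [List.getD_eq_getElem _ _ hk, hgot] at heq
  exact heq

/-- The key degenerate case lemma: if `ℓ(s_i u) = ℓ(u) + 1`, `ℓ(u s_j) = ℓ(u) + 1` and
`ℓ(s_i u s_j) = ℓ(u)`, then `s_i u = u s_j`. -/
lemma simple_mul_eq_mul_simple (i j : I) (u : W)
    (h1 : cs.length (cs.simple i * u) = cs.length u + 1)
    (h2 : cs.length (u * cs.simple j) = cs.length u + 1)
    (h3 : cs.length (cs.simple i * u * cs.simple j) = cs.length u) :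
    cs.simple i * u = u * cs.simple j := by
  obtain ⟨ωu, hlen, hprod⟩ := cs.exists_reduced_word u
  have hπ : cs.wordProd (i :: ωu) = cs.simple i * u := by
    rw [cs.wordProd_cons, ← hprod]
  have hred : cs.IsReduced (i :: ωu) := by
    rw [CoxeterSystem.IsReduced, hπ, h1, List.length_cons, (by rw [hprod]; exact hlen : cs.length u = ωu.length)]
  have hlt : cs.length (cs.wordProd (i :: ωu) * cs.simple j) <
      cs.length (cs.wordProd (i :: ωu)) := by
    rw [hπ, h3, h1]
    omega
  obtain ⟨k, hk, heq⟩ := exchange_right cs (i :: ωu) hred j hlt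
  rw [hπ] at heq
  cases k with
  | zero =>
    rw [List.eraseIdx_cons_zero, ← hprod] at heq
    have h4 := congrArg (· * cs.simple j) heq
    rwa [cs.simple_mul_simple_cancel_right] at h4
  | succ k' =>
    exfalso
    rw [List.eraseIdx_cons_succ, cs.wordProd_cons] at heq
    have heq2 : u * cs.simple j = cs.wordProd (ωu.eraseIdx k') :=
      mul_left_cancel ((mul_assoc (cs.simple i) u (cs.simple j)) ▸ heq)
    have hle : cs.length (u * cs.simple j) ≤ (ωu.eraseIdx k').length := by
      rw [heq2]; exact cs.length_wordProd_le _
    have hklt : k' < ωu.length := by simpa using hk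
    have hlen2 := List.length_eraseIdx_add_one hklt
    have hlen3 : cs.length u = ωu.length := by rw [hprod]; exact hlen
    omega

end SignRep

section Main

open List CoxeterSystem

variable (cs : CoxeterSystem M W) (J : Set I) (δ : I ≃ I) (δW : W ≃* W)

lemma length_le_of_toRel {w w' : W} (h : toRel cs J δ w w') :
    cs.length w' ≤ cs.length w := by
  induction h with
  | refl => exact le_refl _
  | tail _ hstep ih =>
    obtain ⟨j, _, _, hle⟩ := hstep
    exact le_trans hle ih

lemma length_eq_of_simRel {w w' : W} (h : simRel cs J δW w w') :
    cs.length w = cs.length w' := by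
  induction h with
  | refl => rfl
  | tail _ hstep ih => exact ih.trans hstep.1

lemma double_conj_simple (j j' : I) (a : W) :
    cs.simple j' * (cs.simple j' * a * cs.simple j) * cs.simple j = a := by
  rw [mul_assoc (cs.simple j') a, cs.simple_mul_simple_cancel_left,
    cs.simple_mul_simple_cancel_right]

lemma toRel_symm {w w' : W} (h : toRel cs J δ w w') (hl : cs.length w ≤ cs.length w') :
    toRel cs J δ w' w := by
  refine Relation.ReflTransGen.head_induction_on
    (motive := fun a (_ : Relation.ReflTransGen (stepTo cs J δ) a w') =>
      cs.length a ≤ cs.length w' → toRel cs J δ w' a) h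
    (fun _ => Relation.ReflTransGen.refl) ?_ hl
  intro a c hstep hrest ih hla
  obtain ⟨j, hj, heq, hle⟩ := hstep
  have hcw' : cs.length w' ≤ cs.length c := length_le_of_toRel cs J δ hrest
  have hstep' : stepTo cs J δ c a := by
    refine ⟨j, hj, ?_, le_trans hla hcw'⟩
    rw [heq, double_conj_simple]
  exact Relation.ReflTransGen.tail (ih (le_trans hle hla)) hstep'

lemma elem_of_step (hδW : ∀ i : I, δW (cs.simple i) = cs.simple (δ i))
    {j : I} (hj : j ∈ J) {a c : W} (heq : c = cs.simple (δ j) * a * cs.simple j)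
    (hlen : cs.length c = cs.length a) :
    c = a ∨ ElemStrong cs J δW a c := by
  have hmemJ : cs.simple j ∈ parabolic cs J :=
    Subgroup.subset_closure (Set.mem_image_of_mem _ hj)
  rcases cs.length_mul_simple a j with hup | hdown
  · right
    refine ⟨hlen.symm, cs.simple j, hmemJ, ?_, Or.inr ?_⟩
    · rw [hδW j, cs.inv_simple]
      exact heq
    · rw [cs.inv_simple, hup, cs.length_simple]
      omega
  · rcases cs.length_simple_mul a (δ j) with hup2 | hdown2
    · right
      refine ⟨hlen.symm, cs.simple j, hmemJ, ?_, Or.inl ?_⟩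
      · rw [hδW j, cs.inv_simple]
        exact heq
      · rw [hδW j, hup2, cs.length_simple]
        omega
    · left
      have hu1 : cs.simple (δ j) * (cs.simple (δ j) * a) = a :=
        cs.simple_mul_simple_cancel_left (δ j)
      have key := simple_mul_eq_mul_simple cs (δ j) j (cs.simple (δ j) * a)
        (by rw [hu1]; omega)
        (by
          have h5 : cs.simple (δ j) * a * cs.simple j = c := heq.symm
          rw [h5, hlen]
          omega)
        (by rw [hu1]; omega)
      rw [hu1] at key
      exact heq.trans key.symm

lemma simRel_of_toRel (hδW : ∀ i : I, δW (cs.simple i) = cs.simple (δ i))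
    {w w' : W} (h : toRel cs J δ w w') (hl : cs.length w ≤ cs.length w') :
    simRel cs J δW w w' := by
  refine Relation.ReflTransGen.head_induction_on
    (motive := fun a (_ : Relation.ReflTransGen (stepTo cs J δ) a w') =>
      cs.length a ≤ cs.length w' → simRel cs J δW a w') h
    (fun _ => Relation.ReflTransGen.refl) ?_ hl
  intro a c hstep hrest ih hla
  obtain ⟨j, hj, heq, hle⟩ := hstep
  have hcw' : cs.length w' ≤ cs.length c := length_le_of_toRel cs J δ hrest
  have hca : cs.length c = cs.length a := le_antisymm hle (le_trans hla hcw')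
  have hcle : cs.length c ≤ cs.length w' := le_trans hle hla
  rcases elem_of_step cs J δ δW hδW hj heq hca with heqa | helem
  · rw [← heqa]
    exact ih hcle
  · exact Relation.ReflTransGen.head helem (ih hcle)

end Main


/-- `w ≈_{J,δ} w'` if and only if `w →_{J,δ} w'` and `w' →_{J,δ} w`. -/
theorem approx_iff_to_both_ways
    [Fintype I] [Finite W]
    (cs : CoxeterSystem M W) (J : Set I) (δ : I ≃ I)
    (hδM : ∀ i j : I, M (δ i) (δ j) = M i j)
    (δW : W ≃* W) (hδW : ∀ i : I, δW (cs.simple i) = cs.simple (δ i))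
    (w w' : W) :
    (simRel cs J δW w w' ∧ toRel cs J δ w w') ↔
      (toRel cs J δ w w' ∧ toRel cs J δ w' w) := by
  constructor
  · rintro ⟨hsim, hto⟩
    exact ⟨hto, toRel_symm cs J δ hto (length_eq_of_simRel cs J δW hsim).le⟩
  · rintro ⟨hto, hto'⟩
    exact ⟨simRel_of_toRel cs J δ δW hδW hto (length_le_of_toRel cs J δ hto'), hto⟩

end HePaper
end

section
/- Let J ⊆ I, let w ∈ W^J, and let (J_n, w_n)_{n ≥ 0} ∈ T(J, δ) be the sequence corresponding to w (i.e., w_m⁻¹ = w for m sufficiently large). Then: (1) for every root α ∈ Φ⁺_J with α ∉ Φ_{J₁}, the root w(α) lies in Φ⁺ but not in Φ_{δ(J)}; (2) for every i ≥ 1 and every root α ∈ Φ⁺_{J_i} with α ∉ Φ_{J_{i+1}}, the root w(α) lies in Φ⁺_{δ(J_{i-1})} but not in Φ_{δ(J_i)}. -/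
namespace HePaper

/-- A reduced crystallographic root system spanning a finite-dimensional real vector space `V`,
together with a base of simple roots indexed by the finite set `I`. -/
structure RootSystemBase (I : Type*) (V : Type*) [Fintype I] [AddCommGroup V] [Module ℝ V] where
  /-- The set of roots. -/
  Φ : Set V
  finite : Φ.Finite
  /-- The simple roots. -/
  root : I → V
  /-- The simple coroots (as linear functionals). -/
  coroot : I → Module.Dual ℝ V
  root_mem : ∀ i, root i ∈ Φ
  pairing_self : ∀ i, coroot i (root i) = 2
  /-- Crystallographic: all pairings of roots with simple coroots are integers. -/
  crystal : ∀ i, ∀ β ∈ Φ, ∃ n : ℤ, coroot i β = (n : ℝ)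
  /-- The simple reflections preserve `Φ`. -/
  reflect_mem : ∀ i, ∀ β ∈ Φ, β - coroot i β • root i ∈ Φ
  indep : LinearIndependent ℝ root
  spanning : Submodule.span ℝ Φ = ⊤
  ne_zero : ∀ β ∈ Φ, β ≠ 0
  /-- Reduced: the only multiples of a root that are roots are `±` itself. -/
  reduced : ∀ β ∈ Φ, ∀ c : ℝ, c • β ∈ Φ → c = 1 ∨ c = -1
  /-- Base: every root is a nonnegative integer combination of the simple roots, or the
  negative of one. -/
  pos_or_neg : ∀ β ∈ Φ,
    β ∈ AddSubmonoid.closure (Set.range root) ∨ -β ∈ AddSubmonoid.closure (Set.range root)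

namespace RootSystemBase

variable {I V : Type*} [Fintype I] [AddCommGroup V] [Module ℝ V] (R : RootSystemBase I V)

/-- The simple reflection `s_i : v ↦ v - ⟨v, α_i^∨⟩ α_i`. -/
noncomputable def refl (i : I) : V ≃ₗ[ℝ] V := Module.reflection (R.pairing_self i)

/-- The Weyl group `W`, as a subgroup of the linear automorphisms of `V`. -/
noncomputable def weyl : Subgroup (V ≃ₗ[ℝ] V) := Subgroup.closure (Set.range R.refl)

/-- The set of positive roots `Φ⁺`: the roots that are nonnegative integer combinations of
the simple roots. -/
def posRoots : Set V := {β ∈ R.Φ | β ∈ AddSubmonoid.closure (Set.range R.root)}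

/-- `Φ_K = Φ ∩ span_ℤ{α_k : k ∈ K}`. -/
def rootsOf (K : Set I) : Set V :=
  {β ∈ R.Φ | β ∈ (Submodule.span ℤ (R.root '' K) : Submodule ℤ V)}

/-- `Φ⁺_K = Φ⁺ ∩ Φ_K`. -/
def posRootsOf (K : Set I) : Set V := R.posRoots ∩ R.rootsOf K

/-- The standard parabolic subgroup `W_K` generated by the simple reflections `s_k`, `k ∈ K`. -/
noncomputable def parab (K : Set I) : Subgroup (V ≃ₗ[ℝ] V) := Subgroup.closure (R.refl '' K)

/-- `W^K = {w ∈ W : w(α_k) ∈ Φ⁺ for all k ∈ K}`. -/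
def minRight (K : Set I) : Set (V ≃ₗ[ℝ] V) :=
  {w | w ∈ R.weyl ∧ ∀ k ∈ K, w (R.root k) ∈ R.posRoots}

/-- `^K W = {w ∈ W : w⁻¹ ∈ W^K}`. -/
def minLeft (K : Set I) : Set (V ≃ₗ[ℝ] V) := {w | w⁻¹ ∈ R.minRight K}

/-- `Ad(u)(K) = {k ∈ I : s_k = u s_j u⁻¹ for some j ∈ K}`. -/
noncomputable def AdSet (u : V ≃ₗ[ℝ] V) (K : Set I) : Set I :=
  {k : I | ∃ j ∈ K, R.refl k = u * R.refl j * u⁻¹}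

/-- Membership in the set `T(J, δ)` of sequences `(J_n, w_n)_{n ≥ 0}`. -/
noncomputable def InT (J : Set I) (δ : I ≃ I) (Jseq : ℕ → Set I)
    (wseq : ℕ → V ≃ₗ[ℝ] V) : Prop :=
  Jseq 0 = J ∧
  (∀ n : ℕ, Jseq (n + 1) = Jseq n ∩ R.AdSet (wseq n) (δ '' Jseq n)) ∧
  (∀ n : ℕ, wseq n ∈ R.minLeft (Jseq n) ∩ R.minRight (δ '' Jseq n)) ∧
  (∀ n : ℕ, ∃ x ∈ R.parab (Jseq (n + 1)), ∃ y ∈ R.parab (δ '' Jseq n),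
      wseq (n + 1) = x * wseq n * y)

-- ############ infrastructure ############

lemma closure_le_span {β : V} (hβ : β ∈ AddSubmonoid.closure (Set.range R.root)) :
    β ∈ Submodule.span ℝ (Set.range R.root) := by
  induction hβ using AddSubmonoid.closure_induction with
  | mem y hy => exact Submodule.subset_span hy
  | zero => exact Submodule.zero_mem _
  | add a b _ _ ha hb => exact Submodule.add_mem _ ha hb

lemma span_range_root : Submodule.span ℝ (Set.range R.root) = ⊤ := by
  rw [← top_le_iff, ← R.spanning, Submodule.span_le]
  intro β hβ
  rcases R.pos_or_neg β hβ with h | h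
  · exact R.closure_le_span h
  · have := R.closure_le_span h
    simpa using Submodule.neg_mem _ this

noncomputable def basis : Module.Basis I ℝ V := Module.Basis.mk R.indep (by rw [R.span_range_root])

@[simp] lemma basis_apply (i : I) : R.basis i = R.root i := Module.Basis.mk_apply _ _ _

noncomputable def cf (β : V) (i : I) : ℝ := R.basis.repr β i

lemma cf_root (j i : I) [Decidable (j = i)] :
    R.cf (R.root j) i = if j = i then 1 else 0 := by
  rw [cf, ← R.basis_apply j, R.basis.repr_self, Finsupp.single_apply]

lemma cf_add (β γ : V) (i : I) : R.cf (β + γ) i = R.cf β i + R.cf γ i := by simp [cf]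

lemma cf_smul (c : ℝ) (β : V) (i : I) : R.cf (c • β) i = c * R.cf β i := by simp [cf]

lemma cf_zero (i : I) : R.cf 0 i = 0 := by simp [cf]

lemma cf_neg (β : V) (i : I) : R.cf (-β) i = - R.cf β i := by simp [cf]

lemma eq_sum_cf (β : V) : β = ∑ i, R.cf β i • R.root i := by
  conv_lhs => rw [← R.basis.sum_repr β]
  refine Finset.sum_congr rfl fun i _ => by rw [cf, basis_apply]

lemma cf_eq_zero_of_forall (β : V) (h : ∀ i, R.cf β i = 0) : β = 0 := by
  rw [R.eq_sum_cf β]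
  simp [h]

/-- coordinates of elements of the ℕ-closure are naturals -/
lemma cf_nat_of_mem_closure {β : V} (h : β ∈ AddSubmonoid.closure (Set.range R.root)) :
    ∀ i, ∃ n : ℕ, R.cf β i = n := by
  classical
  induction h using AddSubmonoid.closure_induction with
  | mem x hx =>
    obtain ⟨j, rfl⟩ := hx
    intro i
    rw [R.cf_root]
    by_cases hji : j = i <;> simp [hji] <;> [exact ⟨1, by simp⟩; exact ⟨0, by simp⟩]
  | zero => intro i; exact ⟨0, by simp [cf_zero]⟩
  | add a b _ _ ha hb =>
    intro i
    obtain ⟨n, hn⟩ := ha i; obtain ⟨m, hm⟩ := hb i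
    exact ⟨n + m, by rw [cf_add, hn, hm]; push_cast; ring⟩

lemma cf_nonneg_of_mem_closure {β : V} (h : β ∈ AddSubmonoid.closure (Set.range R.root))
    (i : I) : 0 ≤ R.cf β i := by
  obtain ⟨n, hn⟩ := R.cf_nat_of_mem_closure h i
  rw [hn]; positivity

/-- coordinates of elements of the ℤ-span of a sub-family -/
lemma cf_of_mem_span {K : Set I} {β : V}
    (h : β ∈ (Submodule.span ℤ (R.root '' K) : Submodule ℤ V)) :
    ∀ i, ∃ z : ℤ, R.cf β i = z ∧ (z ≠ 0 → i ∈ K) := by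
  classical
  induction h using Submodule.span_induction with
  | mem x hx =>
    obtain ⟨k, hk, rfl⟩ := hx
    intro i
    by_cases hki : k = i
    · exact ⟨1, by rw [R.cf_root, if_pos hki]; simp, fun _ => hki ▸ hk⟩
    · exact ⟨0, by rw [R.cf_root, if_neg hki]; simp, by simp⟩
  | zero => intro i; exact ⟨0, by simp [cf_zero], by simp⟩
  | add a b _ _ ha hb =>
    intro i
    obtain ⟨n, hn, hn'⟩ := ha i; obtain ⟨m, hm, hm'⟩ := hb i
    refine ⟨n + m, by rw [cf_add, hn, hm]; push_cast; ring, fun h0 => ?_⟩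
    rcases eq_or_ne n 0 with h1 | h1
    · exact hm' (by simpa [h1] using h0)
    · exact hn' h1
  | smul z a _ ha =>
    intro i
    obtain ⟨n, hn, hn'⟩ := ha i
    refine ⟨z * n, ?_, fun h0 => hn' fun h1 => by simp [h1] at h0⟩
    rw [show z • a = (z : ℝ) • a from (Int.cast_smul_eq_zsmul ℝ z a).symm, cf_smul, hn]
    push_cast; ring

/-- reconstruct span membership from coordinates -/
lemma mem_span_of_cf {K : Set I} {β : V}
    (h : ∀ i, ∃ z : ℤ, R.cf β i = z ∧ (z ≠ 0 → i ∈ K)) :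
    β ∈ (Submodule.span ℤ (R.root '' K) : Submodule ℤ V) := by
  rw [R.eq_sum_cf β]
  refine Submodule.sum_mem _ fun i _ => ?_
  obtain ⟨z, hz, hz'⟩ := h i
  rcases eq_or_ne z 0 with h0 | h0
  · rw [hz, h0]; simp
  · rw [hz, Int.cast_smul_eq_zsmul]
    exact Submodule.smul_mem _ _ (Submodule.subset_span ⟨i, hz' h0, rfl⟩)

-- chunk 2 appended to a.lean content
lemma cf_sub (β γ : V) (i : I) : R.cf (β - γ) i = R.cf β i - R.cf γ i := by simp [cf]

lemma cf_nonneg_of_posRoot {β : V} (hβ : β ∈ R.posRoots) (i : I) : 0 ≤ R.cf β i :=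
  R.cf_nonneg_of_mem_closure hβ.2 i

lemma exists_cf_pos_of_posRoot {β : V} (hβ : β ∈ R.posRoots) : ∃ i, 0 < R.cf β i := by
  by_contra h
  push_neg at h
  refine R.ne_zero β hβ.1 (R.cf_eq_zero_of_forall β fun i => le_antisymm (h i) ?_)
  exact R.cf_nonneg_of_posRoot hβ i

lemma posRoot_of_cf_pos {β : V} (hβ : β ∈ R.Φ) {i : I} (hi : 0 < R.cf β i) :
    β ∈ R.posRoots := by
  rcases R.pos_or_neg β hβ with h | h
  · exact ⟨hβ, h⟩
  · have := R.cf_nonneg_of_mem_closure h i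
    rw [cf_neg] at this
    linarith

lemma neg_root_not_posRoot (k : I) : -R.root k ∉ R.posRoots := by
  classical
  intro h
  have := R.cf_nonneg_of_posRoot h k
  rw [cf_neg, R.cf_root, if_pos rfl] at this
  linarith

lemma refl_apply (i : I) (v : V) : R.refl i v = v - R.coroot i v • R.root i :=
  Module.reflection_apply v (R.pairing_self i)

/-- generic: a subgroup generated by maps preserving a finite set preserves it -/
lemma closure_mapsTo {S : Set V} (hS : S.Finite) {G : Set (V ≃ₗ[ℝ] V)}
    (hgen : ∀ g ∈ G, Set.MapsTo (⇑g) S S) {u : V ≃ₗ[ℝ] V} (hu : u ∈ Subgroup.closure G) :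
    Set.MapsTo (⇑u) S S := by
  have key : ∀ g : V ≃ₗ[ℝ] V, Set.MapsTo (⇑g) S S → Set.MapsTo (⇑g⁻¹) S S := by
    intro g hg
    have himg : g '' S = S := by
      refine Set.eq_of_subset_of_ncard_le (Set.image_subset_iff.mpr hg) ?_ hS
      rw [Set.ncard_image_of_injective S g.injective]
    intro x hx
    rw [← himg] at hx
    obtain ⟨y, hy, hxy⟩ := hx
    have : g⁻¹ x = y := by
      rw [← hxy]; exact g.symm_apply_apply y
    rwa [this]
  suffices h : Set.MapsTo (⇑u) S S ∧ Set.MapsTo (⇑u⁻¹) S S from h.1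
  induction hu using Subgroup.closure_induction with
  | mem g hg => exact ⟨hgen g hg, key g (hgen g hg)⟩
  | one => constructor <;> · intro x hx; simpa using hx
  | mul a b _ _ ha hb =>
    constructor
    · intro x hx; exact ha.1 (hb.1 hx)
    · intro x hx
      rw [mul_inv_rev]
      exact hb.2 (ha.2 hx)
  | inv a _ ha =>
    refine ⟨ha.2, ?_⟩
    rw [inv_inv]
    exact ha.1

lemma weyl_mapsTo {u : V ≃ₗ[ℝ] V} (hu : u ∈ R.weyl) : Set.MapsTo (⇑u) R.Φ R.Φ := by
  refine closure_mapsTo R.finite ?_ hu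
  rintro g ⟨i, rfl⟩ β hβ
  rw [R.refl_apply]
  exact R.reflect_mem i β hβ

lemma rootsOf_subset (K : Set I) : R.rootsOf K ⊆ R.Φ := fun β hβ => hβ.1

lemma parab_le_weyl (K : Set I) : R.parab K ≤ R.weyl := by
  refine (Subgroup.closure_le _).mpr ?_
  rintro g ⟨k, _, rfl⟩
  exact Subgroup.subset_closure ⟨k, rfl⟩

lemma parab_mono {K K' : Set I} (h : K ⊆ K') : R.parab K ≤ R.parab K' :=
  Subgroup.closure_mono (Set.image_mono h)

/-- parabolic W_{K'} with K' ⊆ K preserves Φ_K -/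
lemma parab_mapsTo_rootsOf {K' K : Set I} (hK : K' ⊆ K) {u : V ≃ₗ[ℝ] V}
    (hu : u ∈ R.parab K') : Set.MapsTo (⇑u) (R.rootsOf K) (R.rootsOf K) := by
  refine closure_mapsTo (R.finite.subset (R.rootsOf_subset K)) ?_ hu
  rintro g ⟨k, hk, rfl⟩ β hβ
  rw [R.refl_apply]
  refine ⟨R.reflect_mem k β hβ.1, ?_⟩
  obtain ⟨z, hz⟩ := R.crystal k β hβ.1
  rw [hz, Int.cast_smul_eq_zsmul]
  exact Submodule.sub_mem _ hβ.2
    (Submodule.smul_mem _ _ (Submodule.subset_span ⟨k, hK hk, rfl⟩))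

lemma exists_cf_pos_notin {K : Set I} {β : V} (hβ : β ∈ R.posRoots)
    (hβK : β ∉ R.rootsOf K) : ∃ i, i ∉ K ∧ 0 < R.cf β i := by
  by_contra h
  push_neg at h
  refine hβK ⟨hβ.1, R.mem_span_of_cf fun i => ?_⟩
  obtain ⟨n, hn⟩ := R.cf_nat_of_mem_closure hβ.2 i
  refine ⟨n, hn, fun h0 => ?_⟩
  by_contra hiK
  have := h i hiK
  rw [hn] at this
  have : (n : ℝ) = 0 := le_antisymm this (by positivity)
  exact h0 (by exact_mod_cast this)

/-- parabolic W_K preserves Φ⁺ \ Φ_K -/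
lemma parab_mapsTo_diff {K : Set I} {u : V ≃ₗ[ℝ] V} (hu : u ∈ R.parab K) :
    Set.MapsTo (⇑u) (R.posRoots \ R.rootsOf K) (R.posRoots \ R.rootsOf K) := by
  classical
  refine closure_mapsTo ((R.finite.subset (fun β hβ => hβ.1.1)).subset
    (fun β hβ => hβ)) ?_ hu
  · rintro g ⟨k, hk, rfl⟩ β ⟨hβ, hβK⟩
    obtain ⟨i, hiK, hic⟩ := R.exists_cf_pos_notin hβ hβK
    have hik : i ≠ k := fun h => hiK (h ▸ hk)
    have hΦ : R.refl k β ∈ R.Φ := by rw [R.refl_apply]; exact R.reflect_mem k β hβ.1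
    have hcf : R.cf (R.refl k β) i = R.cf β i := by
      rw [R.refl_apply, cf_sub, cf_smul, R.cf_root, if_neg (Ne.symm hik)]
      ring
    refine ⟨R.posRoot_of_cf_pos hΦ (by rw [hcf]; exact hic), fun hmem => ?_⟩
    obtain ⟨z, hz, hz'⟩ := R.cf_of_mem_span hmem.2 i
    rcases eq_or_ne z 0 with h0 | h0
    · rw [hcf] at hz; rw [h0] at hz; simp at hz; linarith
    · exact hiK (hz' h0)

/-- image under map: u β = ∑ cf β i • u (root i) -/
lemma map_eq_sum (u : V ≃ₗ[ℝ] V) (β : V) :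
    u β = ∑ i, R.cf β i • u (R.root i) := by
  conv_lhs => rw [R.eq_sum_cf β]
  rw [map_sum]
  exact Finset.sum_congr rfl fun i _ => by rw [map_smul]

/-- fact C: u ∈ W^K maps Φ⁺_K into Φ⁺ -/
lemma minRight_maps {K : Set I} {u : V ≃ₗ[ℝ] V} (hu : u ∈ R.minRight K)
    {β : V} (hβ : β ∈ R.posRootsOf K) : u β ∈ R.posRoots := by
  refine ⟨R.weyl_mapsTo hu.1 hβ.1.1, ?_⟩
  rw [R.map_eq_sum u β]
  refine AddSubmonoid.sum_mem _ fun i _ => ?_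
  rcases eq_or_ne (R.cf β i) 0 with h0 | h0
  · rw [h0, zero_smul]; exact AddSubmonoid.zero_mem _
  · obtain ⟨z, hz, hz'⟩ := R.cf_of_mem_span hβ.2.2 i
    obtain ⟨n, hn⟩ := R.cf_nat_of_mem_closure hβ.1.2 i
    rw [hn, Nat.cast_smul_eq_nsmul]
    exact AddSubmonoid.nsmul_mem _ (hu.2 i (hz' (fun h1 => h0 (by rw [hz, h1]; simp))) ).2 n

/-- transport span membership through a map sending relevant simple roots into a span -/
lemma map_mem_span {K K' : Set I} {u : V ≃ₗ[ℝ] V} {β : V}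
    (hβ : β ∈ (Submodule.span ℤ (R.root '' K) : Submodule ℤ V))
    (h : ∀ k ∈ K, R.cf β k ≠ 0 →
      u (R.root k) ∈ (Submodule.span ℤ (R.root '' K') : Submodule ℤ V)) :
    u β ∈ (Submodule.span ℤ (R.root '' K') : Submodule ℤ V) := by
  rw [R.map_eq_sum u β]
  refine Submodule.sum_mem _ fun i _ => ?_
  rcases eq_or_ne (R.cf β i) 0 with h0 | h0
  · rw [h0, zero_smul]; exact Submodule.zero_mem _
  · obtain ⟨z, hz, hz'⟩ := R.cf_of_mem_span hβ i
    rw [hz, Int.cast_smul_eq_zsmul]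
    refine Submodule.smul_mem _ _ (h i (hz' fun h1 => h0 (by rw [hz, h1]; simp)) h0)

lemma refl_mem_weyl (i : I) : R.refl i ∈ R.weyl := Subgroup.subset_closure ⟨i, rfl⟩

lemma conj_apply (u : V ≃ₗ[ℝ] V) (j : I) (v : V) :
    (u * R.refl j * u⁻¹) v = v - R.coroot j (u.symm v) • u (R.root j) := by
  have h1 : (u * R.refl j * u⁻¹) v = u (R.refl j (u.symm v)) := rfl
  rw [h1, R.refl_apply, map_sub, map_smul, u.apply_symm_apply]

/-- the dual functionals agree: if `u (α_j) = α_k` then `coroot_j ∘ u⁻¹ = coroot_k`. -/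
lemma coroot_conj {u : V ≃ₗ[ℝ] V} (hu : u ∈ R.weyl) {j k : I}
    (hjk : u (R.root j) = R.root k) (v : V) :
    R.coroot j (u.symm v) = R.coroot k v := by
  classical
  set f : V →ₗ[ℝ] ℝ := (R.coroot j).comp (u.symm : V →ₗ[ℝ] V) with hf
  set g : V →ₗ[ℝ] ℝ := R.coroot k with hg
  have hfk : f (R.root k) = 2 := by
    have : u.symm (R.root k) = R.root j := by rw [← hjk, u.symm_apply_apply]
    simp only [hf, LinearMap.coe_comp, Function.comp_apply, LinearEquiv.coe_coe, this]
    exact R.pairing_self j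
  have hgk : g (R.root k) = 2 := R.pairing_self k
  set t : V ≃ₗ[ℝ] V := (u * R.refl j * u⁻¹) * R.refl k with ht
  have htw : t ∈ R.weyl :=
    mul_mem (mul_mem (mul_mem hu (R.refl_mem_weyl j)) (R.weyl.inv_mem hu)) (R.refl_mem_weyl k)
  have htapp : ∀ w : V, t w = w + (g w - f w) • R.root k := by
    intro w
    have h1 : t w = (u * R.refl j * u⁻¹) (R.refl k w) := rfl
    rw [h1, R.conj_apply, hjk, R.refl_apply]
    have h2 : R.coroot j (u.symm (w - R.coroot k w • R.root k))
        = f w - R.coroot k w * 2 := by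
      rw [map_sub, map_smul, map_sub, map_smul]
      simp only [smul_eq_mul]
      rw [show R.coroot j (u.symm (R.root k)) = 2 from hfk]
      rfl
    rw [h2]
    have : g w = R.coroot k w := rfl
    rw [← this]
    module
  suffices hfg : f = g by
    have := LinearMap.congr_fun hfg v
    simpa [hf, hg] using this
  have main : ∀ β ∈ R.Φ, f β = g β := by
    intro β hβ
    set c : ℝ := g β - f β with hc
    by_contra hne
    have hcne : c ≠ 0 := fun h => hne (by rw [hc] at h; linarith [sub_eq_zero.mp h])
    set vseq : ℕ → V := fun n => β + ((n : ℝ) * c) • R.root k with hv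
    have hstep : ∀ n, t (vseq n) = vseq (n + 1) := by
      intro n
      rw [htapp]
      have hgv : g (vseq n) = g β + (n : ℝ) * c * 2 := by
        simp only [hv, map_add, map_smul, smul_eq_mul, hgk]
      have hfv : f (vseq n) = f β + (n : ℝ) * c * 2 := by
        simp only [hv, map_add, map_smul, smul_eq_mul, hfk]
      rw [hgv, hfv]
      simp only [hv]
      push_cast
      module
    have hmem : ∀ n, vseq n ∈ R.Φ := by
      intro n
      induction n with
      | zero => simpa [hv] using hβ
      | succ m ih => rw [← hstep m]; exact R.weyl_mapsTo htw ih
    have : Finite ↥R.Φ := R.finite.to_subtype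
    obtain ⟨n, m, hnm, heq⟩ := Finite.exists_ne_map_eq_of_infinite
      (fun n : ℕ => (⟨vseq n, hmem n⟩ : ↥R.Φ))
    have heq' : vseq n = vseq m := congrArg Subtype.val heq
    have hcfk : ∀ p : ℕ, R.cf (vseq p) k = R.cf β k + (p : ℝ) * c := by
      intro p
      classical
      simp only [hv, cf_add, cf_smul, R.cf_root, if_pos rfl]
      norm_num
    have := hcfk n ▸ hcfk m ▸ congrArg (fun x => R.cf x k) heq'
    have hnc : (n : ℝ) * c = (m : ℝ) * c := by
      have h' := congrArg (fun x => R.cf x k) heq'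
      simp only [hcfk] at h'
      linarith
    have : (n : ℝ) = m := mul_right_cancel₀ hcne hnc
    exact hnm (by exact_mod_cast this)
  exact LinearMap.ext_on R.spanning main

/-- if `u α_j = α_k` then `s_k = u s_j u⁻¹`. -/
lemma refl_conj {u : V ≃ₗ[ℝ] V} (hu : u ∈ R.weyl) {j k : I}
    (hjk : u (R.root j) = R.root k) : R.refl k = u * R.refl j * u⁻¹ := by
  apply LinearEquiv.toLinearMap_injective
  apply LinearMap.ext
  intro v
  have h1 : (u * R.refl j * u⁻¹) v = v - R.coroot j (u.symm v) • R.root k := by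
    rw [R.conj_apply, hjk]
  show R.refl k v = (u * R.refl j * u⁻¹) v
  rw [h1, R.refl_apply, R.coroot_conj hu hjk]

/-- converse: if `s_k = u s_j u⁻¹` and `u α_j` is positive, then `u α_j = α_k`. -/
lemma root_eq_of_refl_conj {u : V ≃ₗ[ℝ] V} (hu : u ∈ R.weyl) {j k : I}
    (hconj : R.refl k = u * R.refl j * u⁻¹) (hpos : u (R.root j) ∈ R.posRoots) :
    u (R.root j) = R.root k := by
  have h1 : R.refl k (u (R.root j)) = - u (R.root j) := by
    rw [hconj]
    have : (u * R.refl j * u⁻¹) (u (R.root j)) = u (R.refl j (R.root j)) := by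
      have : (u⁻¹ : V ≃ₗ[ℝ] V) (u (R.root j)) = R.root j := u.symm_apply_apply _
      show u (R.refl j ((u⁻¹ : V ≃ₗ[ℝ] V) (u (R.root j)))) = _
      rw [this]
    rw [this, R.refl_apply, R.pairing_self]
    rw [show R.root j - (2 : ℝ) • R.root j = -R.root j by module, map_neg]
  rw [R.refl_apply] at h1
  set c : ℝ := R.coroot k (u (R.root j)) with hcdef
  have h2 : u (R.root j) = (c / 2) • R.root k := by
    have h3 : (2 : ℝ) • u (R.root j) = c • R.root k := by
      have h4 := h1
      rw [sub_eq_iff_eq_add] at h4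
      rw [two_smul]
      nth_rewrite 1 [h4]
      module
    have := congrArg (fun x => (2 : ℝ)⁻¹ • x) h3
    simpa [smul_smul, div_eq_inv_mul] using this
  have hmem : (c / 2) • R.root k ∈ R.Φ := by
    rw [← h2]; exact R.weyl_mapsTo hu (R.root_mem j)
  rcases R.reduced (R.root k) (R.root_mem k) (c / 2) hmem with h | h
  · rw [h2, h, one_smul]
  · exfalso
    rw [h2, h] at hpos
    exact R.neg_root_not_posRoot k (by simpa using hpos)

noncomputable def htm : V →ₗ[ℝ] ℝ := ∑ i : I, R.basis.coord i

lemma htm_apply (β : V) : R.htm β = ∑ i, R.cf β i := by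
  simp [htm, cf, Module.Basis.coord_apply]

lemma htm_ge_one {β : V} (hβ : β ∈ R.posRoots) : 1 ≤ R.htm β := by
  obtain ⟨i0, hi0⟩ := R.exists_cf_pos_of_posRoot hβ
  obtain ⟨n, hn⟩ := R.cf_nat_of_mem_closure hβ.2 i0
  have hn1 : (1 : ℝ) ≤ R.cf β i0 := by
    rw [hn] at hi0 ⊢
    exact_mod_cast Nat.one_le_iff_ne_zero.mpr (fun h => by simp [h] at hi0)
  rw [htm_apply]
  calc (1 : ℝ) ≤ R.cf β i0 := hn1
    _ ≤ ∑ i, R.cf β i := Finset.single_le_sum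
        (fun i _ => R.cf_nonneg_of_posRoot hβ i) (Finset.mem_univ i0)

lemma htm_eq_one {β : V} (hβ : β ∈ R.posRoots) (h1 : R.htm β = 1) :
    ∃ k, β = R.root k := by
  classical
  choose n hn using R.cf_nat_of_mem_closure hβ.2
  have hsum : ∑ i, (n i : ℝ) = 1 := by
    rw [← h1, htm_apply]
    exact Finset.sum_congr rfl fun i _ => (hn i).symm
  have hsumn : ∑ i, n i = 1 := by exact_mod_cast hsum
  obtain ⟨i0, hi0⟩ : ∃ i0, n i0 ≠ 0 := by
    by_contra h; push_neg at h; simp [h] at hsumn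
  have h2 : n i0 + ∑ i ∈ Finset.univ.erase i0, n i = 1 := by
    rw [Finset.add_sum_erase _ _ (Finset.mem_univ i0)]; exact hsumn
  have hni0 : n i0 = 1 := by omega
  have hrest : ∑ i ∈ Finset.univ.erase i0, n i = 0 := by omega
  refine ⟨i0, ?_⟩
  rw [R.eq_sum_cf β, ← Finset.add_sum_erase _ _ (Finset.mem_univ i0)]
  have hz : ∀ i ∈ Finset.univ.erase i0, R.cf β i • R.root i = 0 := by
    intro i hi
    have : n i = 0 := by
      have := Finset.sum_eq_zero_iff.mp hrest i hi
      omega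
    rw [hn i, this]; simp
  rw [Finset.sum_eq_zero hz, hn i0, hni0]
  simp

/-- Kilmoyer-type lemma: if `u ∈ ᴷW^L` and `β ∈ Φ⁺_K` with `u⁻¹ β ∈ Φ_L`, then
`β ∈ Φ_{K ∩ Ad(u)(L)}`. -/
lemma kilmoyer {K L : Set I} {u : V ≃ₗ[ℝ] V} (hu : u ∈ R.weyl)
    (hu1 : ∀ j ∈ L, u (R.root j) ∈ R.posRoots)
    (hu2 : ∀ k ∈ K, (u⁻¹ : V ≃ₗ[ℝ] V) (R.root k) ∈ R.posRoots)
    {β : V} (hβ : β ∈ R.posRootsOf K)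
    (hγ : (u⁻¹ : V ≃ₗ[ℝ] V) β ∈ (Submodule.span ℤ (R.root '' L) : Submodule ℤ V)) :
    β ∈ R.rootsOf (K ∩ R.AdSet u L) := by
  classical
  set γ : V := (u⁻¹ : V ≃ₗ[ℝ] V) β with hγdef
  have huβ : u γ = β := by rw [hγdef]; exact u.apply_symm_apply β
  have hγpos : γ ∈ R.posRoots := R.minRight_maps (K := K) ⟨R.weyl.inv_mem hu, hu2⟩ hβ
  have hγL : ∀ i, R.cf γ i ≠ 0 → i ∈ L := by
    intro i h0
    obtain ⟨z, hz, hz'⟩ := R.cf_of_mem_span hγ i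
    exact hz' fun h1 => h0 (by rw [hz, h1]; simp)
  have hβK : ∀ i, R.cf β i ≠ 0 → i ∈ K := by
    intro i h0
    obtain ⟨z, hz, hz'⟩ := R.cf_of_mem_span hβ.2.2 i
    exact hz' fun h1 => h0 (by rw [hz, h1]; simp)
  -- height computation
  have hb1 : R.htm β = ∑ j, R.cf γ j * R.htm (u (R.root j)) := by
    conv_lhs => rw [← huβ, R.map_eq_sum u γ]
    rw [map_sum]
    exact Finset.sum_congr rfl fun j _ => by rw [map_smul, smul_eq_mul]
  have hb2 : R.htm γ = ∑ k, R.cf β k * R.htm ((u⁻¹ : V ≃ₗ[ℝ] V) (R.root k)) := by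
    conv_lhs => rw [hγdef, R.map_eq_sum (u⁻¹ : V ≃ₗ[ℝ] V) β]
    rw [map_sum]
    exact Finset.sum_congr rfl fun k _ => by rw [map_smul, smul_eq_mul]
  have termwise1 : ∀ j ∈ Finset.univ (α := I), R.cf γ j ≤ R.cf γ j * R.htm (u (R.root j)) := by
    intro j _
    rcases eq_or_ne (R.cf γ j) 0 with h0 | h0
    · rw [h0]; simp
    · exact le_mul_of_one_le_right (R.cf_nonneg_of_posRoot hγpos j)
        (R.htm_ge_one (hu1 j (hγL j h0)))
  have termwise2 : ∀ k ∈ Finset.univ (α := I),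
      R.cf β k ≤ R.cf β k * R.htm ((u⁻¹ : V ≃ₗ[ℝ] V) (R.root k)) := by
    intro k _
    rcases eq_or_ne (R.cf β k) 0 with h0 | h0
    · rw [h0]; simp
    · exact le_mul_of_one_le_right (R.cf_nonneg_of_posRoot hβ.1 k)
        (R.htm_ge_one (hu2 k (hβK k h0)))
  have hle1 : R.htm γ ≤ R.htm β := by
    rw [hb1, htm_apply]
    exact Finset.sum_le_sum termwise1
  have hle2 : R.htm β ≤ R.htm γ := by
    rw [hb2, htm_apply]
    exact Finset.sum_le_sum termwise2
  have hhteq : R.htm β = R.htm γ := le_antisymm hle2 hle1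
  have hsumeq : ∑ j, R.cf γ j = ∑ j, R.cf γ j * R.htm (u (R.root j)) := by
    rw [← hb1, ← htm_apply, hhteq]
  have heach := (Finset.sum_eq_sum_iff_of_le termwise1).mp hsumeq
  -- each j with nonzero coefficient maps to a simple root
  have hsimple : ∀ j ∈ L, R.cf γ j ≠ 0 →
      u (R.root j) ∈ (Submodule.span ℤ (R.root '' (R.AdSet u L)) : Submodule ℤ V) := by
    intro j hjL h0
    have h1 : R.htm (u (R.root j)) = 1 := by
      have he := heach j (Finset.mem_univ j)
      have h2 : R.cf γ j * 1 = R.cf γ j * R.htm (u (R.root j)) := by rw [← he]; ring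
      have := mul_left_cancel₀ h0 h2
      linarith
    obtain ⟨kj, hkj⟩ := R.htm_eq_one (hu1 j hjL) h1
    exact Submodule.subset_span ⟨kj, ⟨j, hjL, R.refl_conj hu hkj⟩, hkj.symm⟩
  have hspanAd : β ∈ (Submodule.span ℤ (R.root '' (R.AdSet u L)) : Submodule ℤ V) := by
    rw [← huβ]
    exact R.map_mem_span hγ fun j hjL h0 => hsimple j hjL h0
  refine ⟨hβ.1.1, R.mem_span_of_cf fun i => ?_⟩
  obtain ⟨z, hz, hz'⟩ := R.cf_of_mem_span hβ.2.2 i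
  obtain ⟨z2, hz2, hz2'⟩ := R.cf_of_mem_span hspanAd i
  have hzz : z = z2 := by
    have : (z : ℝ) = z2 := by rw [← hz, hz2]
    exact_mod_cast this
  exact ⟨z, hz, fun h0 => ⟨hz' h0, hz2' (by rw [← hzz]; exact h0)⟩⟩


section Seq

variable {J : Set I} {δ : I ≃ I} {Jseq : ℕ → Set I} {wseq : ℕ → V ≃ₗ[ℝ] V}

lemma Jseq_antitone (hT : R.InT J δ Jseq wseq) {m n : ℕ} (h : m ≤ n) :
    Jseq n ⊆ Jseq m := by
  induction n, h using Nat.le_induction with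
  | base => exact subset_rfl
  | succ n hn ih =>
    refine subset_trans ?_ ih
    rw [hT.2.1 n]
    exact Set.inter_subset_left

lemma step_span (hT : R.InT J δ Jseq wseq) (n : ℕ) {β : V}
    (hβ : β ∈ R.rootsOf (Jseq (n + 1))) :
    ((wseq n)⁻¹ : V ≃ₗ[ℝ] V) β ∈ R.rootsOf (δ '' Jseq n) := by
  obtain ⟨hT0, hT1, hT2, hT3⟩ := hT
  have hw : wseq n ∈ R.weyl := (hT2 n).2.1
  refine ⟨R.weyl_mapsTo (R.weyl.inv_mem hw) hβ.1, ?_⟩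
  refine R.map_mem_span hβ.2 ?_
  intro k hk _
  have hk' : k ∈ R.AdSet (wseq n) (δ '' Jseq n) := by
    have h2 : k ∈ Jseq n ∩ R.AdSet (wseq n) (δ '' Jseq n) := by rw [← hT1 n]; exact hk
    exact h2.2
  obtain ⟨j, hj, hconj⟩ := hk'
  have heq : wseq n (R.root j) = R.root k :=
    R.root_eq_of_refl_conj hw hconj ((hT2 n).2.2 j hj)
  have heq2 : ((wseq n)⁻¹ : V ≃ₗ[ℝ] V) (R.root k) = R.root j := by
    rw [← heq]; exact (wseq n).symm_apply_apply _
  rw [heq2]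
  exact Submodule.subset_span ⟨j, hj, rfl⟩

lemma factor (hT : R.InT J δ Jseq wseq) {i m : ℕ} (him : i ≤ m) :
    ∃ X ∈ R.parab (Jseq (i + 1)), ∃ Y ∈ R.parab (δ '' Jseq i), wseq m = X * wseq i * Y := by
  induction m, him using Nat.le_induction with
  | base => exact ⟨1, one_mem _, 1, one_mem _, by simp⟩
  | succ m hm ih =>
    obtain ⟨X, hX, Y, hY, hfac⟩ := ih
    obtain ⟨x, hx, y, hy, hfac2⟩ := hT.2.2.2 m
    refine ⟨x * X, mul_mem (R.parab_mono (R.Jseq_antitone hT (by omega)) hx) hX,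
      Y * y, mul_mem hY (R.parab_mono (Set.image_mono (R.Jseq_antitone hT hm)) hy), ?_⟩
    rw [hfac2, hfac]
    group

lemma main_step (hT : R.InT J δ Jseq wseq) {i m : ℕ} (him : i ≤ m) {α : V}
    (hα : α ∈ R.posRootsOf (Jseq i)) (hα' : α ∉ R.rootsOf (Jseq (i + 1))) :
    (((wseq m)⁻¹ : V ≃ₗ[ℝ] V) α ∈ R.posRoots ∧
      ((wseq m)⁻¹ : V ≃ₗ[ℝ] V) α ∉ R.rootsOf (δ '' Jseq i)) ∧
    (∀ i' : ℕ, i = i' + 1 → ((wseq m)⁻¹ : V ≃ₗ[ℝ] V) α ∈ R.rootsOf (δ '' Jseq i')) := by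
  obtain ⟨X, hX, Y, hY, hfac⟩ := R.factor hT him
  have hinv : (wseq m)⁻¹ = Y⁻¹ * (wseq i)⁻¹ * X⁻¹ := by rw [hfac]; group
  set β : V := (X⁻¹ : V ≃ₗ[ℝ] V) α with hβdef
  have hβ1 : β ∈ R.posRoots \ R.rootsOf (Jseq (i + 1)) :=
    R.parab_mapsTo_diff ((R.parab (Jseq (i + 1))).inv_mem hX) ⟨hα.1, hα'⟩
  have hβ2 : β ∈ R.rootsOf (Jseq i) := by
    refine R.parab_mapsTo_rootsOf ?_ ((R.parab (Jseq (i + 1))).inv_mem hX) hα.2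
    rw [hT.2.1 i]; exact Set.inter_subset_left
  set γ : V := ((wseq i)⁻¹ : V ≃ₗ[ℝ] V) β with hγdef
  have hwi := hT.2.2.1 i
  have hγpos : γ ∈ R.posRoots := R.minRight_maps hwi.1 ⟨hβ1.1, hβ2⟩
  have hγnot : γ ∉ R.rootsOf (δ '' Jseq i) := by
    intro hmem
    refine hβ1.2 ?_
    have hk := R.kilmoyer (K := Jseq i) (L := δ '' Jseq i) hwi.2.1 hwi.2.2 hwi.1.2
      ⟨hβ1.1, hβ2⟩ hmem.2
    rwa [← hT.2.1 i] at hk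
  have hγprev : ∀ i' : ℕ, i = i' + 1 → γ ∈ R.rootsOf (δ '' Jseq i') := by
    rintro i' rfl
    obtain ⟨x, hx, y, hy, hfac2⟩ := hT.2.2.2 i'
    have hxβ : (x⁻¹ : V ≃ₗ[ℝ] V) β ∈ R.rootsOf (Jseq (i' + 1)) :=
      R.parab_mapsTo_rootsOf subset_rfl ((R.parab (Jseq (i' + 1))).inv_mem hx) hβ2
    have h2 := R.step_span hT i' hxβ
    have hγeq : γ = (y⁻¹ : V ≃ₗ[ℝ] V) (((wseq i')⁻¹ : V ≃ₗ[ℝ] V) ((x⁻¹ : V ≃ₗ[ℝ] V) β)) := by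
      rw [hγdef, hfac2]
      have : (x * wseq i' * y)⁻¹ = y⁻¹ * (wseq i')⁻¹ * x⁻¹ := by group
      rw [this]
      rfl
    rw [hγeq]
    exact R.parab_mapsTo_rootsOf subset_rfl ((R.parab (δ '' Jseq i')).inv_mem hy) h2
  have happ : ((wseq m)⁻¹ : V ≃ₗ[ℝ] V) α = (Y⁻¹ : V ≃ₗ[ℝ] V) γ := by
    rw [hinv, hγdef, hβdef]
    rfl
  constructor
  · have := R.parab_mapsTo_diff ((R.parab (δ '' Jseq i)).inv_mem hY) ⟨hγpos, hγnot⟩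
    rw [happ]
    exact ⟨this.1, this.2⟩
  · rintro i' rfl
    rw [happ]
    refine R.parab_mapsTo_rootsOf (Set.image_mono (R.Jseq_antitone hT (by omega)))
      ((R.parab (δ '' Jseq (i' + 1))).inv_mem hY) (hγprev i' rfl)

end Seq


/-- let `w ∈ W^J` and let `(J_n, w_n)_{n ≥ 0} ∈ T(J, δ)` be the sequence
corresponding to `w`. Then (1) for `α ∈ Φ⁺_J` with `α ∉ Φ_{J₁}`, the root `w(α)` is positive
and does not lie in `Φ_{δ(J)}`; (2) for `i ≥ 1` and `α ∈ Φ⁺_{J_i}` with `α ∉ Φ_{J_{i+1}}`,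
the root `w(α)` lies in `Φ⁺_{δ(J_{i-1})}` but not in `Φ_{δ(J_i)}`. -/
theorem image_of_levi_roots (J : Set I) (δ : I ≃ I)
    (hδ : ∀ i j : I, R.coroot (δ i) (R.root (δ j)) = R.coroot i (R.root j))
    (w : V ≃ₗ[ℝ] V) (hw : w ∈ R.minRight J)
    (Jseq : ℕ → Set I) (wseq : ℕ → V ≃ₗ[ℝ] V)
    (hT : R.InT J δ Jseq wseq)
    (hcorr : ∃ N : ℕ, ∀ n : ℕ, N ≤ n → (wseq n)⁻¹ = w) :
    (∀ α ∈ R.posRootsOf J, α ∉ R.rootsOf (Jseq 1) →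
      w α ∈ R.posRoots ∧ w α ∉ R.rootsOf (δ '' J)) ∧
    (∀ i : ℕ, 1 ≤ i → ∀ α ∈ R.posRootsOf (Jseq i), α ∉ R.rootsOf (Jseq (i + 1)) →
      w α ∈ R.posRootsOf (δ '' Jseq (i - 1)) ∧ w α ∉ R.rootsOf (δ '' Jseq i)) := by
  obtain ⟨N, hN⟩ := hcorr
  constructor
  · intro α hα hα1
    have hα0 : α ∈ R.posRootsOf (Jseq 0) := by rw [hT.1]; exact hα
    have h := R.main_step hT (Nat.zero_le N) hα0 hα1
    rw [hN N le_rfl] at h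
    rw [← hT.1]
    exact h.1
  · intro i hi α hα hα1
    have h := R.main_step hT (Nat.le_add_left i N) hα hα1
    rw [hN (N + i) (by omega)] at h
    refine ⟨⟨h.1.1, ?_⟩, h.1.2⟩
    have := h.2 (i - 1) (by omega)
    exact this

end RootSystemBase

end HePaper
end
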